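/- arXiv:1410.4586 — 6 statements merged into one kernel-verified Lean document; each statement's English description precedes it below -/
import Mathlib

section
/- Let σ², κ, ρ be real numbers with |ρ| ≤ 1, let 0 < r < 1, and let φ, ψ : ℂ → ℂ be continuous on the circle {s ∈ ℂ : |s| = r}. For l ≥ 1 set A_l := (1/(2πi)) ∮_{|s|=r} s^{l−1} φ(s) ds and B_l := (1/(2πi)) ∮_{|t|=r} t^{l−1} ψ(t) dt (counterclockwise circles of radius r). Then (−1/(4π²)) ∮_{|s|=r} ∮_{|t|=r} φ(s) ψ(t) · [ (σ² − ρ − 1) + ρ/(1 − ρst)² + 1/(1 − st)² + κ·st ] ds dt = (σ² − ρ − 1)·A₁B₁ + κ·A₂B₂ + Σ_{l=1}^∞ l·(1 + ρ^l)·A_l B_l, where the series on the right converges. -/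
/-! On the circles `|s| = |t| = r` we have `|ρ s t| ≤ |s t| = r² < 1`, so the kernel is the
absolutely convergent power series `∑ cₙ (s t)ⁿ` with `cₙ = (n + 1)(1 + ρⁿ⁺¹)` plus the
polynomial part `σ² − ρ − 1 + κ s t`, carried as the finitely supported coefficients
`Pi.single 0 (σ² − ρ − 1) + Pi.single 1 κ`. Dominated convergence integrates it term by term,
first in `t` and then in `s`, and `∮ sⁿ φ(s) ds = 2πi Aₙ₊₁`; the factor `(2πi)² = −4π²` cancels
the prefactor. -/

open Metric

lemma hasSum_coe_add_one_mul_geometric {𝕜 : Type*} [NormedField 𝕜] {z : 𝕜} (hz : ‖z‖ < 1) :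
    HasSum (fun n : ℕ => ((n : 𝕜) + 1) * z ^ n) ((1 - z) ^ 2)⁻¹ := by
  have hz1 : 1 - z ≠ 0 := sub_ne_zero.mpr fun h => by simp [← h] at hz
  convert (hasSum_coe_mul_geometric_of_norm_lt_one hz).add (hasSum_geometric_of_norm_lt_one hz)
    using 1
  · funext n; ring
  · field_simp; ring

lemma hasSum_circleIntegral_of_dominated {r : ℝ} (hr : 0 < r) {F : ℕ → ℂ → ℂ} {f : ℂ → ℂ}
    (bound : ℕ → ℝ) (hF : ∀ n, ContinuousOn (F n) (sphere 0 r)) (hbound : Summable bound)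
    (hFb : ∀ n, ∀ z ∈ sphere (0 : ℂ) r, ‖F n z‖ ≤ bound n)
    (hsum : ∀ z ∈ sphere (0 : ℂ) r, HasSum (fun n => F n z) (f z)) :
    HasSum (fun n => ∮ z in C(0, r), F n z) (∮ z in C(0, r), f z) := by
  have hmem := circleMap_mem_sphere (0 : ℂ) hr.le
  simp only [circleIntegral, deriv_circleMap, smul_eq_mul]
  refine intervalIntegral.hasSum_integral_of_dominated_convergence
    (fun n _ => r * bound n) (fun n => ?_) (fun n => ?_)
    (.of_forall fun _ _ => hbound.mul_left r) intervalIntegrable_const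
    (.of_forall fun θ _ => (hsum _ (hmem θ)).mul_left _)
  · exact ((continuous_circleMap 0 r).mul continuous_const).aestronglyMeasurable.mul
      ((hF n).comp_continuous (continuous_circleMap 0 r) hmem).aestronglyMeasurable
  · refine .of_forall fun θ _ => ?_
    rw [norm_mul, norm_mul, norm_circleMap_zero, Complex.norm_I, mul_one, abs_of_pos hr]
    exact mul_le_mul_of_nonneg_left (hFb n _ (hmem θ)) hr.le

lemma hasSum_mul_circleIntegral_pow_mul {r : ℝ} (hr : 0 < r) {φ : ℂ → ℂ}
    (hφ : ContinuousOn φ (sphere 0 r)) {a : ℕ → ℂ} (ha : Summable fun n => ‖a n‖ * r ^ n)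
    {f : ℂ → ℂ} (hf : ∀ z ∈ sphere (0 : ℂ) r, HasSum (fun n => a n * (z ^ n * φ z)) (f z)) :
    HasSum (fun n => a n * ∮ z in C(0, r), z ^ n * φ z) (∮ z in C(0, r), f z) := by
  obtain ⟨M, hM⟩ := (isCompact_sphere (0 : ℂ) r).exists_bound_of_continuousOn hφ
  simp only [← circleIntegral.integral_const_mul]
  refine hasSum_circleIntegral_of_dominated hr (fun n => ‖a n‖ * r ^ n * M)
    (fun n => continuousOn_const.mul ((continuousOn_pow n).mul hφ)) (ha.mul_right M)
    (fun n z hz => ?_) hf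
  rw [norm_mul, norm_mul, norm_pow, mem_sphere_zero_iff_norm.mp hz, ← mul_assoc]
  exact mul_le_mul_of_nonneg_left (hM z hz) (by positivity)

lemma norm_circleIntegral_pow_mul_le {r M : ℝ} (hr : 0 ≤ r) {ψ : ℂ → ℂ}
    (hM : ∀ z ∈ sphere (0 : ℂ) r, ‖ψ z‖ ≤ M) (n : ℕ) :
    ‖∮ z in C(0, r), z ^ n * ψ z‖ ≤ 2 * Real.pi * r * M * r ^ n := by
  rw [mul_assoc _ M, mul_comm M]
  refine circleIntegral.norm_integral_le_of_norm_le_const hr fun z hz => ?_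
  rw [norm_mul, norm_pow, mem_sphere_zero_iff_norm.mp hz]
  exact mul_le_mul_of_nonneg_left (hM z hz) (by positivity)

theorem hasSum_circleIntegral_circleIntegral_mul_kernel {r : ℝ} (hr : 0 < r) {φ ψ : ℂ → ℂ}
    (hφ : ContinuousOn φ (sphere 0 r)) (hψ : ContinuousOn ψ (sphere 0 r)) {c : ℕ → ℂ}
    (hc : Summable fun n => ‖c n‖ * (r ^ 2) ^ n) {K : ℂ → ℂ}
    (hK : ∀ z : ℂ, ‖z‖ = r ^ 2 → HasSum (fun n => c n * z ^ n) (K z)) :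
    HasSum (fun n => c n * ((∮ s in C(0, r), s ^ n * φ s) * ∮ t in C(0, r), t ^ n * ψ t))
      (∮ s in C(0, r), ∮ t in C(0, r), φ s * ψ t * K (s * t)) := by
  obtain ⟨M, hM⟩ := (isCompact_sphere (0 : ℂ) r).exists_bound_of_continuousOn hψ
  have hnorm : ∀ z ∈ sphere (0 : ℂ) r, ‖z‖ = r := fun z hz => mem_sphere_zero_iff_norm.mp hz
  have hinner : ∀ s ∈ sphere (0 : ℂ) r,
      HasSum (fun n => c n * (∮ t in C(0, r), t ^ n * ψ t) * (s ^ n * φ s))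
        (∮ t in C(0, r), φ s * ψ t * K (s * t)) := by
    intro s hs
    have hsum : Summable fun n => ‖c n * s ^ n * φ s‖ * r ^ n :=
      (hc.mul_right ‖φ s‖).congr fun n => by
        rw [norm_mul, norm_mul, norm_pow, hnorm s hs]; ring
    refine (hasSum_mul_circleIntegral_pow_mul hr hψ hsum fun t ht => ?_).congr_fun fun n => by ring
    exact ((hK (s * t) (by rw [norm_mul, hnorm s hs, hnorm t ht, sq])).mul_left
      (φ s * ψ t)).congr_fun fun n => by ring
  refine (hasSum_mul_circleIntegral_pow_mul hr hφ ?_ hinner).congr_fun fun n => by ring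
  refine Summable.of_nonneg_of_le (fun n => by positivity) (fun n => ?_)
    (hc.mul_right (2 * Real.pi * r * M))
  rw [norm_mul]
  calc ‖c n‖ * ‖∮ t in C(0, r), t ^ n * ψ t‖ * r ^ n
      ≤ ‖c n‖ * (2 * Real.pi * r * M * r ^ n) * r ^ n := by
        gcongr; exact norm_circleIntegral_pow_mul_le hr.le hM n
    _ = ‖c n‖ * (r ^ 2) ^ n * (2 * Real.pi * r * M) := by ring

lemma pi_single_zero_add_pi_single_one_apply_eq_zero {M : Type*} [AddZeroClass M] (x y : M)
    {n : ℕ} (hn : n ∉ ({0, 1} : Finset ℕ)) : (Pi.single 0 x + Pi.single 1 y : ℕ → M) n = 0 := by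
  obtain ⟨h0, h1⟩ : n ≠ 0 ∧ n ≠ 1 := by simpa using hn
  simp [h0, h1]

lemma hasSum_pi_single_add_pi_single_mul {R : Type*} [Semiring R] [TopologicalSpace R]
    (x y : R) (q : ℕ → R) :
    HasSum (fun n => (Pi.single 0 x + Pi.single 1 y : ℕ → R) n * q n) (x * q 0 + y * q 1) := by
  have hsupp : ∀ n ∉ ({0, 1} : Finset ℕ), (Pi.single 0 x + Pi.single 1 y : ℕ → R) n * q n = 0 :=
    fun n hn => by rw [pi_single_zero_add_pi_single_one_apply_eq_zero x y hn, zero_mul]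
  simpa using hasSum_sum_of_ne_finset_zero hsupp

lemma HasSum.sub_pi_single_add_pi_single_mul {R : Type*} [Ring R] [TopologicalSpace R]
    [IsTopologicalAddGroup R] {a q : ℕ → R} {x y T : R}
    (h : HasSum (fun n => (a n + (Pi.single 0 x + Pi.single 1 y : ℕ → R) n) * q n) T) :
    HasSum (fun n => a n * q n) (T - (x * q 0 + y * q 1)) :=
  (h.sub (hasSum_pi_single_add_pi_single_mul x y q)).congr_fun fun n => by rw [add_mul]; abel

lemma hasSum_add_one_mul_one_add_pow_mul_pow {ρ z : ℂ} (hρ : ‖ρ‖ ≤ 1) (hz : ‖z‖ < 1) :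
    HasSum (fun n : ℕ => ((n : ℂ) + 1) * (1 + ρ ^ (n + 1)) * z ^ n)
      (ρ * ((1 - ρ * z) ^ 2)⁻¹ + ((1 - z) ^ 2)⁻¹) := by
  have hρz : ‖ρ * z‖ < 1 := by
    rw [norm_mul]; exact (mul_le_of_le_one_left (norm_nonneg z) hρ).trans_lt hz
  refine (((hasSum_coe_add_one_mul_geometric hρz).mul_left ρ).add
    (hasSum_coe_add_one_mul_geometric hz)).congr_fun fun n => ?_
  ring

lemma hasSum_kernel_coeff_mul_pow {ρ z : ℂ} (x y : ℂ) (hρ : ‖ρ‖ ≤ 1) (hz : ‖z‖ < 1) :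
    HasSum (fun n : ℕ =>
        (((n : ℂ) + 1) * (1 + ρ ^ (n + 1)) + (Pi.single 0 x + Pi.single 1 y : ℕ → ℂ) n) * z ^ n)
      (x + ρ * ((1 - ρ * z) ^ 2)⁻¹ + ((1 - z) ^ 2)⁻¹ + y * z) := by
  convert (hasSum_add_one_mul_one_add_pow_mul_pow hρ hz).add
    (hasSum_pi_single_add_pi_single_mul x y (z ^ ·)) using 1
  · funext n; ring
  · ring

lemma norm_add_one_mul_one_add_pow_le {ρ : ℂ} (hρ : ‖ρ‖ ≤ 1) (n : ℕ) :
    ‖((n : ℂ) + 1) * (1 + ρ ^ (n + 1))‖ ≤ 2 * ((n : ℝ) + 1) := by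
  rw [norm_mul, mul_comm, show (n : ℂ) + 1 = ((n + 1 : ℕ) : ℂ) by push_cast; ring,
    Complex.norm_natCast]
  push_cast
  gcongr
  calc ‖1 + ρ ^ (n + 1)‖ ≤ 1 + ‖ρ‖ ^ (n + 1) := by simpa using norm_add_le (1 : ℂ) (ρ ^ (n + 1))
    _ ≤ 2 := by linarith [pow_le_one₀ (norm_nonneg ρ) hρ (n := n + 1)]

lemma summable_norm_kernel_coeff_mul_pow {ρ : ℂ} (x y : ℂ) (hρ : ‖ρ‖ ≤ 1) {q : ℝ}
    (hq0 : 0 ≤ q) (hq1 : q < 1) :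
    Summable fun n : ℕ =>
      ‖((n : ℂ) + 1) * (1 + ρ ^ (n + 1)) + (Pi.single 0 x + Pi.single 1 y : ℕ → ℂ) n‖ * q ^ n := by
  have hgeom : Summable fun n : ℕ => ((n : ℝ) + 1) * q ^ n :=
    (hasSum_coe_add_one_mul_geometric (by rwa [Real.norm_of_nonneg hq0])).summable
  have hpoly : Summable fun n => ‖(Pi.single 0 x + Pi.single 1 y : ℕ → ℂ) n‖ * q ^ n :=
    summable_of_ne_finset_zero fun n hn => by
      rw [pi_single_zero_add_pi_single_one_apply_eq_zero x y hn, norm_zero, zero_mul]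
  refine Summable.of_nonneg_of_le (fun n => by positivity) (fun n => ?_)
    ((hgeom.mul_left 2).add hpoly)
  grw [norm_add_le, norm_add_one_mul_one_add_pow_le hρ n]
  exact le_of_eq (by ring)

lemma circleIntegral_pow_mul_eq_of_coeff {r : ℝ} {φ : ℂ → ℂ} {A : ℕ → ℂ}
    (hA : ∀ l : ℕ, 1 ≤ l →
      A l = (2 * Real.pi * Complex.I)⁻¹ * ∮ s in C(0, r), s ^ ((l : ℤ) - 1) * φ s) (n : ℕ) :
    ∮ s in C(0, r), s ^ n * φ s = 2 * Real.pi * Complex.I * A (n + 1) := by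
  rw [hA (n + 1) n.succ_pos, mul_inv_cancel_left₀ (by simp [Real.pi_ne_zero])]
  push_cast
  simp only [add_sub_cancel_right, zpow_natCast]

lemma circleIntegral_pow_mul_mul_circleIntegral_pow_mul_eq {r : ℝ} {φ ψ : ℂ → ℂ} {A B : ℕ → ℂ}
    (hA : ∀ l : ℕ, 1 ≤ l →
      A l = (2 * Real.pi * Complex.I)⁻¹ * ∮ s in C(0, r), s ^ ((l : ℤ) - 1) * φ s)
    (hB : ∀ l : ℕ, 1 ≤ l →
      B l = (2 * Real.pi * Complex.I)⁻¹ * ∮ t in C(0, r), t ^ ((l : ℤ) - 1) * ψ t) (c : ℂ) (n : ℕ) :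
    -1 / (4 * (Real.pi : ℂ) ^ 2) *
        (c * ((∮ s in C(0, r), s ^ n * φ s) * ∮ t in C(0, r), t ^ n * ψ t)) =
      c * (A (n + 1) * B (n + 1)) := by
  rw [circleIntegral_pow_mul_eq_of_coeff hA, circleIntegral_pow_mul_eq_of_coeff hB]
  field_simp
  linear_combination (-4 * c * A (n + 1) * B (n + 1)) * Complex.I_sq

/-- Double contour-integral identity expressing the limiting covariance as a series in the
Faber-type coefficients `A_l`, `B_l`. -/
theorem stmt3 (σ2 κ ρ : ℝ) (hρ : |ρ| ≤ 1) (r : ℝ) (hr0 : 0 < r) (hr1 : r < 1)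
    (φ ψ : ℂ → ℂ)
    (hφ : ContinuousOn φ (Metric.sphere (0 : ℂ) r))
    (hψ : ContinuousOn ψ (Metric.sphere (0 : ℂ) r))
    (A B : ℕ → ℂ)
    (hA : ∀ l : ℕ, 1 ≤ l →
      A l = (2 * Real.pi * Complex.I)⁻¹ * ∮ s in C(0, r), s ^ ((l : ℤ) - 1) * φ s)
    (hB : ∀ l : ℕ, 1 ≤ l →
      B l = (2 * Real.pi * Complex.I)⁻¹ * ∮ t in C(0, r), t ^ ((l : ℤ) - 1) * ψ t) :
    Summable (fun l : ℕ => ((l : ℂ) + 1) * (1 + (ρ : ℂ) ^ (l + 1)) * A (l + 1) * B (l + 1)) ∧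
    (-1 / (4 * (Real.pi : ℂ) ^ 2)) *
        (∮ s in C(0, r), ∮ t in C(0, r), φ s * ψ t *
          (((σ2 : ℂ) - (ρ : ℂ) - 1) + (ρ : ℂ) * ((1 - (ρ : ℂ) * s * t) ^ 2)⁻¹
            + ((1 - s * t) ^ 2)⁻¹ + (κ : ℂ) * s * t)) =
      ((σ2 : ℂ) - (ρ : ℂ) - 1) * A 1 * B 1 + (κ : ℂ) * A 2 * B 2 +
        ∑' l : ℕ, ((l : ℂ) + 1) * (1 + (ρ : ℂ) ^ (l + 1)) * A (l + 1) * B (l + 1) := by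
  set x : ℂ := (σ2 : ℂ) - ρ - 1
  have hρ' : ‖(ρ : ℂ)‖ ≤ 1 := by simpa using hρ
  have hr2 : r ^ 2 < 1 := by nlinarith
  have htotal := (hasSum_circleIntegral_circleIntegral_mul_kernel hr0 hφ hψ
    (summable_norm_kernel_coeff_mul_pow x κ hρ' (sq_nonneg r) hr2)
    fun z hz => hasSum_kernel_coeff_mul_pow x κ hρ' (hz.trans_lt hr2)).mul_left
      (-1 / (4 * (Real.pi : ℂ) ^ 2))
  simp only [circleIntegral_pow_mul_mul_circleIntegral_pow_mul_eq hA hB] at htotal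
  have hseries := htotal.sub_pi_single_add_pi_single_mul.congr_fun fun n => mul_assoc _ _ _
  simp only [mul_assoc (ρ : ℂ), mul_assoc (κ : ℂ)]
  exact ⟨hseries.summable, by rw [hseries.tsum_eq]; ring⟩
end

section
/- Let σ², κ be real numbers, let ρ ∈ (0,1), and let 0 < r < 1. For j ≥ 1 define F_j(z) := 2 ρ^{j/2} T_j(z/(2√ρ)), where T_j is the j-th Chebyshev polynomial of the first kind (evaluated over ℂ). Then for all integers j, k ≥ 1, (−1/(4π²)) ∮_{|s|=r} ∮_{|t|=r} F_j(ρs + 1/s) F_k(ρt + 1/t) · [ (σ² − ρ − 1) + ρ/(1 − ρst)² + 1/(1 − st)² + κ·st ] ds dt = δ_{jk} · ( (σ² − ρ − 1)·δ_{1j} + κ·δ_{2j} + j·(1 + ρ^j) ), where δ_{jk} is the Kronecker delta and the circle integrals are over counterclockwise circles of radius r centered at 0. -/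
/-!
Substituting `u = √ρ s` in `2 T_j((u + u⁻¹)/2) = u^j + u^{-j}` turns `F_j(ρ s + 1/s)` into the
Laurent polynomial `ρ^j s^j + s^{-j}`. Against a function that is holomorphic on the closed disc,
the term `ρ^j s^j` integrates to zero while `s^{-j}` picks out `2πi` times the `(j-1)`-st Taylor
coefficient. For fixed `s` on the circle the kernel is holomorphic in `t` on the closed disc
(`|ρ s t|, |s t| ≤ r² < 1`), and its Taylor coefficients come from `1/(1-x)² = ∑ (i+1) xⁱ`; so the
inner integral is a polynomial in `s`, whose coefficients the outer integral picks out in the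
same way.
-/

open Complex Polynomial Metric Set Real

theorem Polynomial.Chebyshev.T_eval_half_add_inv {u : ℂ} (hu : u ≠ 0) (n : ℤ) :
    (Chebyshev.T ℂ n).eval ((u + u⁻¹) / 2) = (u ^ n + u ^ (-n)) / 2 := by
  have hcosh (w : ℂ) : Complex.cosh w = (exp w + (exp w)⁻¹) / 2 := by
    rw [Complex.cosh, Complex.exp_neg]
  have := Chebyshev.T_complex_cosh (log u) n
  rwa [hcosh, hcosh, exp_log hu, exp_int_mul, exp_log hu, ← zpow_neg] at this

theorem two_mul_pow_mul_T_eval {q s : ℂ} (hq : q ≠ 0) (hs : s ≠ 0) (n : ℕ) :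
    2 * q ^ n * (Chebyshev.T ℂ n).eval ((q ^ 2 * s + s⁻¹) / (2 * q)) =
      (q ^ 2) ^ n * s ^ n + 1 / s ^ n := by
  have harg : (q ^ 2 * s + s⁻¹) / (2 * q) = (q * s + (q * s)⁻¹) / 2 := by
    field_simp
  rw [harg, Chebyshev.T_eval_half_add_inv (mul_ne_zero hq hs), zpow_neg, zpow_natCast]
  field_simp
  ring

theorem circleIntegral_zpow {r : ℝ} (hr : r ≠ 0) (n : ℤ) :
    (∮ z in C(0, r), z ^ n) = if n = -1 then 2 * π * I else 0 := by
  split_ifs with h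
  · simpa [h] using circleIntegral.integral_sub_center_inv 0 hr
  · simpa using circleIntegral.integral_sub_zpow_of_ne h 0 0 r

theorem circleIntegrable_zpow {r : ℝ} (hr : r ≠ 0) (n : ℤ) :
    CircleIntegrable (fun z => z ^ n) 0 r := by
  simpa using (circleIntegrable_sub_zpow_iff (c := 0) (w := 0) (n := n) (R := r)).2
    (Or.inr (Or.inr (by simpa [eq_comm] using hr)))

theorem circleIntegral_eval_div_pow {r : ℝ} (hr : 0 < r) (p : ℂ[X]) (n : ℕ) :
    (∮ z in C(0, r), p.eval z / z ^ (n + 1)) = 2 * π * I * p.coeff n := by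
  have hN : p.natDegree < p.natDegree + n + 1 := by omega
  have hsphere : EqOn (fun z => p.eval z / z ^ (n + 1))
      (fun z => ∑ i ∈ Finset.range (p.natDegree + n + 1),
        p.coeff i • z ^ ((i : ℤ) - (n + 1 : ℕ))) (sphere 0 r) := by
    intro z hz
    simp only [eval_eq_sum_range' hN, Finset.sum_div, smul_eq_mul]
    refine Finset.sum_congr rfl fun i _ => ?_
    rw [zpow_sub₀ (ne_of_mem_sphere hz hr.ne'), zpow_natCast, zpow_natCast, mul_div_assoc]
  have hterm (i : ℕ) : (∮ z in C(0, r), p.coeff i • z ^ ((i : ℤ) - (n + 1 : ℕ))) =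
      if i = n then 2 * π * I * p.coeff n else 0 := by
    rw [circleIntegral.integral_smul, circleIntegral_zpow hr.ne']
    by_cases h : i = n
    · simp [h, mul_comm]
    · rw [if_neg (by omega), if_neg h, smul_zero]
  rw [circleIntegral.integral_congr hr.le hsphere, circleIntegral.integral_fun_sum
      fun i _ => (circleIntegrable_zpow hr.ne' _).const_fun_smul,
    Finset.sum_congr rfl fun i _ => hterm i, Finset.sum_ite_eq',
    if_pos (Finset.mem_range.2 (by omega))]

theorem sum_range_succ_mul_pow_mul_one_sub_sq {R : Type*} [CommRing R] (x : R) (n : ℕ) :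
    (∑ i ∈ Finset.range n, ((i : R) + 1) * x ^ i) * (1 - x) ^ 2 =
      1 - x ^ n * ((n + 1) - n * x) := by
  induction n with
  | zero => simp
  | succ n ih =>
    rw [Finset.sum_range_succ, add_mul, ih]
    push_cast
    ring

theorem one_sub_mul_ne_zero {c z : ℂ} {r : ℝ} (hc : ‖c‖ * r < 1) (hz : z ∈ closedBall 0 r) :
    1 - c * z ≠ 0 := by
  refine sub_ne_zero.2 fun h => (norm_one (α := ℂ)).not_lt ?_
  calc ‖(1 : ℂ)‖ = ‖c‖ * ‖z‖ := by rw [h, norm_mul]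
    _ ≤ ‖c‖ * r := by gcongr; simpa using hz
    _ < 1 := hc

noncomputable def invOneSubSqTaylor (c : ℂ) (n : ℕ) : ℂ[X] :=
  ∑ i ∈ Finset.range (n + 1), C ((i + 1) * c ^ i) * X ^ i

theorem coeff_invOneSubSqTaylor (c : ℂ) (n : ℕ) :
    (invOneSubSqTaylor c n).coeff n = (n + 1) * c ^ n := by
  simp only [invOneSubSqTaylor, finsetSum_coeff, coeff_C_mul_X_pow]
  simp

theorem exists_inv_one_sub_mul_sq_eq {c : ℂ} {r : ℝ} (hc : ‖c‖ * r < 1) (n : ℕ) :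
    ∃ h : ℂ → ℂ, DifferentiableOn ℂ h (closedBall 0 r) ∧ ∀ z ∈ closedBall (0 : ℂ) r,
      ((1 - c * z) ^ 2)⁻¹ = (invOneSubSqTaylor c n).eval z + z ^ (n + 1) * h z := by
  refine ⟨fun z => c ^ (n + 1) * ((n + 2) - (n + 1) * (c * z)) / (1 - c * z) ^ 2, ?_, ?_⟩
  · fun_prop (disch := intro z hz; exact pow_ne_zero 2 (one_sub_mul_ne_zero hc hz))
  · intro z hz
    have hz' := one_sub_mul_ne_zero hc hz
    have key := sum_range_succ_mul_pow_mul_one_sub_sq (c * z) (n + 1)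
    simp only [invOneSubSqTaylor, eval_finsetSum, eval_mul, eval_C, eval_pow, eval_X]
    field_simp
    push_cast at key
    simp only [mul_pow, ← mul_assoc] at key
    linear_combination -key

theorem circleIntegral_eq_two_pi_I_mul_coeff {r : ℝ} (hr : 0 < r) {f h : ℂ → ℂ} (p : ℂ[X])
    (n : ℕ) (hh : DifferentiableOn ℂ h (closedBall 0 r))
    (hf : EqOn f (fun z => p.eval z / z ^ (n + 1) + h z) (sphere 0 r)) :
    (∮ z in C(0, r), f z) = 2 * π * I * p.coeff n := by
  have hpole : CircleIntegrable (fun z => p.eval z / z ^ (n + 1)) 0 r :=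
    ContinuousOn.circleIntegrable hr.le <| by
      fun_prop (disch := intro z hz; exact pow_ne_zero _ (ne_of_mem_sphere hz hr.ne'))
  rw [circleIntegral.integral_congr hr.le hf, circleIntegral.integral_add hpole
    ((hh.continuousOn.mono sphere_subset_closedBall).circleIntegrable hr.le),
    circleIntegral_eval_div_pow hr,
    (hh.mono closure_ball_subset_closedBall).diffContOnCl.circleIntegral_eq_zero hr.le, add_zero]

theorem circleIntegral_pow_add_one_div_pow_mul_eval {r : ℝ} (hr : 0 < r) (e : ℂ) (p : ℂ[X])
    (n : ℕ) :
    (∮ z in C(0, r), (e * z ^ (n + 1) + 1 / z ^ (n + 1)) * p.eval z) =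
      2 * π * I * p.coeff n := by
  refine circleIntegral_eq_two_pi_I_mul_coeff hr p n (h := fun z => e * z ^ (n + 1) * p.eval z)
    (by fun_prop) fun z hz => ?_
  dsimp only
  ring

theorem circleIntegral_mul_kernel {r : ℝ} (hr : 0 < r) (a b e ρ s : ℂ)
    (hρs : ‖ρ * s‖ * r < 1) (hs : ‖s‖ * r < 1) (n : ℕ) {g : ℂ → ℂ}
    (hg : ∀ t ∈ sphere (0 : ℂ) r, g t = e * t ^ (n + 1) + 1 / t ^ (n + 1)) :
    (∮ t in C(0, r), g t * (a + ρ * ((1 - ρ * s * t) ^ 2)⁻¹ + ((1 - s * t) ^ 2)⁻¹ + b * s * t)) =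
      2 * π * I * ((if n = 0 then a else 0) + (if n = 1 then b else 0) * s +
        (n + 1) * (ρ ^ (n + 1) + 1) * s ^ n) := by
  obtain ⟨h₁, hd₁, he₁⟩ := exists_inv_one_sub_mul_sq_eq hρs n
  obtain ⟨h₂, hd₂, he₂⟩ := exists_inv_one_sub_mul_sq_eq hs n
  set p := C a + C (b * s) * X + ρ • invOneSubSqTaylor (ρ * s) n + invOneSubSqTaylor s n
  have hK : ∀ t ∈ closedBall (0 : ℂ) r,
      a + ρ * ((1 - ρ * s * t) ^ 2)⁻¹ + ((1 - s * t) ^ 2)⁻¹ + b * s * t =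
        p.eval t + t ^ (n + 1) * (ρ * h₁ t + h₂ t) := by
    intro t ht
    rw [he₁ t ht, he₂ t ht]
    simp only [p, eval_add, eval_mul, eval_smul, eval_C, eval_X, smul_eq_mul]
    ring
  rw [circleIntegral_eq_two_pi_I_mul_coeff hr p n
    (h := fun t => ρ * h₁ t + h₂ t + e * t ^ (n + 1) * (p.eval t + t ^ (n + 1) * (ρ * h₁ t + h₂ t)))
    (by fun_prop) fun t ht => ?_]
  · simp only [p, coeff_add, coeff_C, coeff_C_mul_X, coeff_smul, coeff_invOneSubSqTaylor,
      smul_eq_mul]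
    split_ifs <;> ring
  · have ht0 : t ≠ 0 := ne_of_mem_sphere ht hr.ne'
    dsimp only
    rw [hg t ht, hK t (sphere_subset_closedBall ht)]
    field_simp
    ring

theorem circleIntegral_circleIntegral_mul_kernel {r : ℝ} (hr : 0 < r) (hr1 : r < 1) (a b ρ : ℂ)
    (hρ : ‖ρ‖ * r ^ 2 < 1) (m n : ℕ) {f g : ℂ → ℂ}
    (hf : ∀ s ∈ sphere (0 : ℂ) r, f s = ρ ^ (m + 1) * s ^ (m + 1) + 1 / s ^ (m + 1))
    (hg : ∀ t ∈ sphere (0 : ℂ) r, g t = ρ ^ (n + 1) * t ^ (n + 1) + 1 / t ^ (n + 1)) :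
    (∮ s in C(0, r), ∮ t in C(0, r),
      f s * g t * (a + ρ * ((1 - ρ * s * t) ^ 2)⁻¹ + ((1 - s * t) ^ 2)⁻¹ + b * s * t)) =
      (2 * π * I) ^ 2 * if m = n then
        (if n = 0 then a else 0) + (if n = 1 then b else 0) + (n + 1) * (ρ ^ (n + 1) + 1)
      else 0 := by
  set P : ℂ[X] := (2 * π * I) • (C (if n = 0 then a else 0) + C (if n = 1 then b else 0) * X +
    C ((n + 1) * (ρ ^ (n + 1) + 1)) * X ^ n)
  have hinner : EqOn (fun s => ∮ t in C(0, r),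
      f s * g t * (a + ρ * ((1 - ρ * s * t) ^ 2)⁻¹ + ((1 - s * t) ^ 2)⁻¹ + b * s * t))
      (fun s => (ρ ^ (m + 1) * s ^ (m + 1) + 1 / s ^ (m + 1)) * P.eval s) (sphere 0 r) := by
    intro s hs
    have hsr : ‖s‖ = r := by simpa using hs
    simp only [mul_assoc (f s), circleIntegral.integral_const_mul]
    rw [circleIntegral_mul_kernel hr _ _ _ _ _ (by rw [norm_mul, hsr]; nlinarith)
      (by rw [hsr]; nlinarith) n hg, hf s hs]
    simp only [P, eval_smul, eval_mul, eval_add, eval_C, eval_X, eval_pow, smul_eq_mul]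
  rw [circleIntegral.integral_congr hr.le hinner, circleIntegral_pow_add_one_div_pow_mul_eval hr]
  simp only [P, coeff_smul, coeff_add, coeff_C, coeff_C_mul_X, coeff_C_mul_X_pow, smul_eq_mul]
  by_cases hmn : m = n
  · subst hmn
    rcases m with _ | _ | m <;> simp [-mul_eq_mul_left_iff] <;> ring
  · rw [if_neg hmn, if_neg hmn]
    split_ifs <;> first | omega | simp

/-- Orthogonality of the rescaled Chebyshev (Faber) polynomials for the limiting covariance
bilinear form. -/
theorem stmt4 (σ2 κ ρ : ℝ) (hρ0 : 0 < ρ) (hρ1 : ρ < 1)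
    (r : ℝ) (hr0 : 0 < r) (hr1 : r < 1)
    (F : ℕ → ℂ → ℂ)
    (hF : ∀ (j : ℕ) (z : ℂ), 1 ≤ j →
      F j z = 2 * ((Real.sqrt ρ : ℂ)) ^ j *
        Polynomial.eval (z / (2 * (Real.sqrt ρ : ℂ))) (Polynomial.Chebyshev.T ℂ (j : ℤ))) :
    ∀ j k : ℕ, 1 ≤ j → 1 ≤ k →
      (-1 / (4 * (Real.pi : ℂ) ^ 2)) *
          (∮ s in C(0, r), ∮ t in C(0, r),
            F j ((ρ : ℂ) * s + s⁻¹) * F k ((ρ : ℂ) * t + t⁻¹) *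
              (((σ2 : ℂ) - (ρ : ℂ) - 1) + (ρ : ℂ) * ((1 - (ρ : ℂ) * s * t) ^ 2)⁻¹
                + ((1 - s * t) ^ 2)⁻¹ + (κ : ℂ) * s * t)) =
        if j = k then
          ((σ2 : ℂ) - (ρ : ℂ) - 1) * (if j = 1 then 1 else 0)
            + (κ : ℂ) * (if j = 2 then 1 else 0)
            + (j : ℂ) * (1 + (ρ : ℂ) ^ j)
        else 0 := by
  intro j k hj hk
  obtain ⟨m, rfl⟩ := Nat.exists_eq_add_of_le' hj
  obtain ⟨n, rfl⟩ := Nat.exists_eq_add_of_le' hk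
  have hsqrt : ((√ρ : ℝ) : ℂ) ^ 2 = ρ := by rw [← ofReal_pow, Real.sq_sqrt hρ0.le]
  have hFaber (l : ℕ) (hl : 1 ≤ l) (z : ℂ) (hz : z ∈ sphere 0 r) :
      F l (ρ * z + z⁻¹) = (ρ : ℂ) ^ l * z ^ l + 1 / z ^ l := by
    rw [hF l _ hl, ← hsqrt, two_mul_pow_mul_T_eval _ (ne_of_mem_sphere hz hr0.ne')]
    exact ofReal_ne_zero.2 (Real.sqrt_ne_zero'.2 hρ0)
  have hρr : ‖(ρ : ℂ)‖ * r ^ 2 < 1 := by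
    rw [norm_real, Real.norm_of_nonneg hρ0.le]
    nlinarith
  have h2piI (x : ℂ) : -1 / (4 * (π : ℂ) ^ 2) * ((2 * π * I) ^ 2 * x) = x := by
    field_simp
    linear_combination (-4 * x) * I_sq
  rw [circleIntegral_circleIntegral_mul_kernel hr0 hr1 _ _ _ hρr m n (hFaber (m + 1) (by omega))
    (hFaber (n + 1) (by omega)), h2piI]
  by_cases hmn : m = n
  · subst hmn
    rcases m with _ | _ | m <;> simp [-mul_eq_mul_left_iff] <;> ring
  · simp [hmn]
end

section
/- Let (ξ₁,ξ₂) be a random vector in ℝ² and ζ a real random variable satisfying condition C0, and let ε > 0 be such that, with ε_N := N^{−ε}, both ε_N^{−6}·E[|ξ_i|⁶ 1_{|ξ_i| > ε_N √N}] → 0 for i = 1,2 and ε_N^{−4}·E[|ζ|⁴ 1_{|ζ| > ε_N √N}] → 0. For each N let Y_N = (y_{ij}) be a real elliptic random matrix of size N with atom variables (ξ₁,ξ₂), ζ, and let Ŷ_N = (ŷ_{ij}) be its truncation: ỹ_{ij} := y_{ij} 1_{|y_{ij}| ≤ ε_N √N} − E[y_{ij} 1_{|y_{ij}| ≤ ε_N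 √N}]; ŷ_{ij} := ỹ_{ij}/√Var(ỹ_{ij}) for i ≠ j, and ŷ_{ii} := σ·ỹ_{ii}/√Var(ỹ_{ii}). Set X_N := Y_N/√N and X̂_N := Ŷ_N/√N. Then N·ε_N^{−2}·E[‖X_N − X̂_N‖_F²] → 0 as N → ∞, where ‖·‖_F is the Hilbert–Schmidt (Frobenius) norm, and consequently N·P(‖X_N − X̂_N‖ > ε_N) → 0, where ‖·‖ is the operator norm. -/
open MeasureTheory ProbabilityTheory Filter Topology

noncomputable section

/-- The ellipsoid `E_ρ`. -/
def ellipse (ρ : ℝ) : Set ℂ :=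
  if ρ = 1 then {z : ℂ | z.im = 0 ∧ |z.re| ≤ 2}
  else if ρ = -1 then {z : ℂ | z.re = 0 ∧ |z.im| ≤ 2}
  else {z : ℂ | z.re ^ 2 / (1 + ρ) ^ 2 + z.im ^ 2 / (1 - ρ) ^ 2 < 1}

/-- The `δ`-neighborhood `E_{ρ,δ}`. -/
def ellipseNbhd (ρ δ : ℝ) : Set ℂ := {z : ℂ | Metric.infDist z (ellipse ρ) ≤ δ}

/-- Index type for the independent entries of an elliptic random matrix. -/
abbrev EllipticIndex (N : ℕ) := (Fin N) ⊕ {p : Fin N × Fin N // p.1 < p.2}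

abbrev ellipticCodomain (N : ℕ) : EllipticIndex N → Type := Sum.elim (fun _ => ℝ) (fun _ => ℝ × ℝ)

def ellipticMS (N : ℕ) : ∀ idx : EllipticIndex N, MeasurableSpace (ellipticCodomain N idx)
  | Sum.inl _ => (inferInstance : MeasurableSpace ℝ)
  | Sum.inr _ => (inferInstance : MeasurableSpace (ℝ × ℝ))

def ellipticFam {Ω : Type*} {N : ℕ} (Y : Ω → Matrix (Fin N) (Fin N) ℝ) :
    ∀ idx : EllipticIndex N, Ω → ellipticCodomain N idx
  | Sum.inl i => fun ω => Y ω i i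
  | Sum.inr p => fun ω => (Y ω p.1.1 p.1.2, Y ω p.1.2 p.1.1)

/-- `Y` is a real elliptic random matrix with atom variables `(ξ₁, ξ₂), ζ`
(defined on an auxiliary probability space). -/
def IsEllipticRM {Ω Ω' : Type*} [MeasurableSpace Ω] [MeasurableSpace Ω']
    (P : Measure Ω) (P' : Measure Ω') (ξ₁ ξ₂ ζ : Ω' → ℝ)
    {N : ℕ} (Y : Ω → Matrix (Fin N) (Fin N) ℝ) : Prop :=
  iIndepFun (m := ellipticMS N) (ellipticFam Y) P ∧
  (∀ p : {p : Fin N × Fin N // p.1 < p.2},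
    IdentDistrib (fun ω => (Y ω p.1.1 p.1.2, Y ω p.1.2 p.1.1))
      (fun ω' => (ξ₁ ω', ξ₂ ω')) P P') ∧
  (∀ i : Fin N, IdentDistrib (fun ω => Y ω i i) ζ P P')

/-- Condition C0 on the atom variables. -/
def CondC0 {Ω' : Type*} [MeasurableSpace Ω'] (P' : Measure Ω')
    (ξ₁ ξ₂ ζ : Ω' → ℝ) (σ2 : ℝ) : Prop :=
  (∫ ω, ξ₁ ω ∂P') = 0 ∧ (∫ ω, ξ₂ ω ∂P') = 0 ∧
  (∫ ω, (ξ₁ ω) ^ 2 ∂P') = 1 ∧ (∫ ω, (ξ₂ ω) ^ 2 ∂P') = 1 ∧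
  (∫ ω, ζ ω ∂P') = 0 ∧ (∫ ω, (ζ ω) ^ 2 ∂P') = σ2 ∧
  ∃ τ : ℝ, 0 < τ ∧
    (∫⁻ ω, ENNReal.ofReal (|ξ₁ ω| ^ (6 + τ)) ∂P') < ⊤ ∧
    (∫⁻ ω, ENNReal.ofReal (|ξ₂ ω| ^ (6 + τ)) ∂P') < ⊤ ∧
    (∫⁻ ω, ENNReal.ofReal (|ζ ω| ^ (4 + τ)) ∂P') < ⊤

/-- `tr f(M)` : the sum of `f` over the eigenvalues of the real matrix `M`
(the roots of the characteristic polynomial over `ℂ`, with multiplicity). -/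
def trF {N : ℕ} (f : ℂ → ℂ) (M : Matrix (Fin N) (Fin N) ℝ) : ℂ :=
  (((M.map (Complex.ofReal)).charpoly.roots).map f).sum

/-- The coefficient `a_l(f)` from the Faber expansion. -/
def faberCoeff (ρ r : ℝ) (f : ℂ → ℂ) (l : ℕ) : ℂ :=
  (2 * Real.pi * Complex.I)⁻¹ * ∮ s in C(0, r), s ^ ((l : ℤ) - 1) * f (ρ * s + s⁻¹)

/-- The limiting variance `V(f)`. -/
def limVar (σ2 ρ κ : ℝ) (a : ℕ → ℂ) : ℂ :=
  (σ2 - ρ - 1) * (a 1) ^ 2 + (κ - 2 * ρ ^ 2 - 1) * (a 2) ^ 2 +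
    ∑' l : ℕ, ((l : ℂ) + 1) * (1 + (ρ : ℂ) ^ (l + 1)) * (a (l + 1)) ^ 2

/-- The least singular value of a square complex matrix. -/
def sigmaMin {N : ℕ} (M : Matrix (Fin N) (Fin N) ℂ) : ℝ :=
  ⨅ x : {x : EuclideanSpace ℂ (Fin N) // ‖x‖ = 1}, ‖Matrix.toEuclideanLin M x.1‖

/-- The operator (spectral) norm of a square matrix over `ℝ` or `ℂ`. -/
def opNorm {𝕜 : Type*} [RCLike 𝕜] {N : ℕ} (M : Matrix (Fin N) (Fin N) 𝕜) : ℝ :=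
  ‖LinearMap.toContinuousLinearMap (Matrix.toEuclideanLin M)‖

/-- A sequence of events holds with overwhelming probability. -/
def OverwhelmingProb {Ω : ℕ → Type*} [∀ n, MeasurableSpace (Ω n)]
    (P : ∀ n, Measure (Ω n)) (E : ∀ n, Set (Ω n)) : Prop :=
  ∀ C : ℝ, 0 < C → ∃ K : ℝ, 0 < K ∧ ∀ n : ℕ, 1 ≤ n →
    P n (E n)ᶜ ≤ ENNReal.ofReal (K * (n : ℝ) ^ (-C))

end

/-! Write `T = trunc t f` for an entry `f` and `R = f - T`, so that `E T = -E R =: m` and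
`Var T = c² - E R² - m²`, where `c²` is the variance of `f`. The normalised truncation differs
from `f` by `(R + m) + (1 - c / √Var T) (T - m)`, and `(1 - c / √v)² v = (c - √v)² ≤ c² - v`
because `√v ≤ c`; hence every entry of `Y - Ŷ` has second moment at most `4 E R²`, and
`E R² ≤ t⁻ᵈ E[|f|^(d+2); |f| > t]`, used with `d = 4` off the diagonal and `d = 2` on it.
Summing over the `N` diagonal and fewer than `N²` off-diagonal entries at the level
`t = N^(-ε) √N` gives the Frobenius bound; since the operator norm is at most the Frobenius
norm, Markov's inequality then gives the probability bound. -/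

namespace EllipticTruncation

noncomputable section

def trunc (t x : ℝ) : ℝ := if |x| ≤ t then x else 0

lemma measurable_trunc (t : ℝ) : Measurable (trunc t) :=
  Measurable.ite (measurableSet_le measurable_abs measurable_const) measurable_id
    measurable_const

lemma abs_trunc_le (t x : ℝ) : |trunc t x| ≤ |x| := by
  unfold trunc; split_ifs <;> simp

lemma sq_trunc_add_sq_sub_trunc (t x : ℝ) : trunc t x ^ 2 + (x - trunc t x) ^ 2 = x ^ 2 := by
  unfold trunc; split_ifs <;> ring

lemma sq_sub_trunc (t x : ℝ) : (x - trunc t x) ^ 2 = if t < |x| then |x| ^ 2 else 0 := by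
  unfold trunc
  by_cases h : |x| ≤ t
  · simp [h, not_lt.2 h]
  · simp [h, not_le.1 h]

lemma one_sub_div_sqrt_sq_mul_le {c v : ℝ} (hc : 0 ≤ c) (hv : 0 ≤ v) (hvc : v ≤ c ^ 2) :
    (1 - c / √v) ^ 2 * v ≤ c ^ 2 - v := by
  rcases hv.eq_or_lt with rfl | hv
  · simp [sq_nonneg]
  have hs : 0 < √v := Real.sqrt_pos.2 hv
  have hsc : √v ≤ c := Real.sqrt_le_iff.2 ⟨hc, hvc⟩
  have hsq : √v ^ 2 = v := Real.sq_sqrt hv.le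
  have key : (1 - c / √v) ^ 2 * √v ^ 2 = (√v - c) ^ 2 := by field_simp
  rw [hsq] at key
  nlinarith

section

variable {Ω : Type*} [MeasurableSpace Ω] {P : Measure Ω}

lemma integral_add_sq_le {X Y : Ω → ℝ} (hX : MemLp X 2 P) (hY : MemLp Y 2 P) :
    ∫ ω, (X ω + Y ω) ^ 2 ∂P ≤ 2 * ∫ ω, X ω ^ 2 ∂P + 2 * ∫ ω, Y ω ^ 2 ∂P := by
  rw [← integral_const_mul, ← integral_const_mul,
    ← integral_add (hX.integrable_sq.const_mul 2) (hY.integrable_sq.const_mul 2)]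
  exact integral_mono (hX.add hY).integrable_sq
    ((hX.integrable_sq.const_mul 2).add (hY.integrable_sq.const_mul 2))
    fun ω => by nlinarith [sq_nonneg (X ω - Y ω)]

lemma memLp_trunc {f : Ω → ℝ} (hf : MemLp f 2 P) (t : ℝ) : MemLp (fun ω => trunc t (f ω)) 2 P :=
  hf.mono ((measurable_trunc t).comp_aemeasurable hf.aemeasurable).aestronglyMeasurable
    (ae_of_all _ fun ω => abs_trunc_le t (f ω))

def tailMoment (P : Measure Ω) (t : ℝ) (q : ℕ) (η : Ω → ℝ) : ℝ :=
  ∫ ω, (if t < |η ω| then |η ω| ^ q else 0) ∂P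

lemma measurable_tail (t : ℝ) (q : ℕ) : Measurable fun x : ℝ => if t < |x| then |x| ^ q else 0 :=
  Measurable.ite (measurableSet_lt measurable_const measurable_abs) (measurable_abs.pow_const q)
    measurable_const

lemma tailMoment_nonneg (t : ℝ) (q : ℕ) (η : Ω → ℝ) : 0 ≤ tailMoment P t q η :=
  integral_nonneg fun ω => by dsimp only; split_ifs <;> positivity

lemma integral_sq_sub_trunc (t : ℝ) (f : Ω → ℝ) :
    ∫ ω, (f ω - trunc t (f ω)) ^ 2 ∂P = tailMoment P t 2 f := by
  simp_rw [sq_sub_trunc]; rfl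

lemma _root_.ProbabilityTheory.IdentDistrib.tailMoment_eq {Ω' : Type*} [MeasurableSpace Ω']
    {P' : Measure Ω'} {f : Ω → ℝ} {η : Ω' → ℝ} (hid : IdentDistrib f η P P') (t : ℝ) (q : ℕ) :
    tailMoment P t q f = tailMoment P' t q η :=
  (hid.comp (measurable_tail t q)).integral_eq

variable [IsProbabilityMeasure P] {f : Ω → ℝ}

lemma tailMoment_two_le {η : Ω → ℝ} {d : ℕ} (hη : MemLp η (d + 2 : ℕ) P) {t : ℝ} (ht : 0 < t) :
    tailMoment P t 2 η ≤ (t ^ d)⁻¹ * tailMoment P t (d + 2) η := by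
  have hint : Integrable (fun ω => if t < |η ω| then |η ω| ^ (d + 2) else 0) P :=
    hη.integrable_norm_pow'.mono ((measurable_tail t _).comp_aemeasurable
      hη.aemeasurable).aestronglyMeasurable (ae_of_all _ fun _ => by
        split_ifs <;> simp [abs_nonneg])
  rw [tailMoment, tailMoment, ← integral_const_mul]
  refine integral_mono_of_nonneg (ae_of_all _ fun ω => ?_) (hint.const_mul _)
    (ae_of_all _ fun ω => ?_)
  · dsimp only; split_ifs <;> positivity
  · dsimp only
    split_ifs with h
    · rw [le_inv_mul_iff₀ (pow_pos ht d), pow_add]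
      exact mul_le_mul_of_nonneg_right (pow_le_pow_left₀ ht.le h.le d) (by positivity)
    · simp

def truncNormalize (P : Measure Ω) (c t : ℝ) (f : Ω → ℝ) (ω : Ω) : ℝ :=
  c * (trunc t (f ω) - ∫ ω', trunc t (f ω') ∂P) /
    √(∫ ω', (trunc t (f ω') - ∫ ω'', trunc t (f ω'') ∂P) ^ 2 ∂P)

lemma memLp_truncNormalize (hf : MemLp f 2 P) (c t : ℝ) : MemLp (truncNormalize P c t f) 2 P :=
  (((memLp_trunc hf t).sub (memLp_const _)).const_mul c).mul_const _

theorem integral_sq_sub_truncNormalize_le (hf : MemLp f 2 P) (hmean : ∫ ω, f ω ∂P = 0)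
    {c : ℝ} (hc : 0 ≤ c) (hvar : ∫ ω, f ω ^ 2 ∂P = c ^ 2) (t : ℝ) :
    ∫ ω, (f ω - truncNormalize P c t f ω) ^ 2 ∂P ≤ 4 * ∫ ω, (f ω - trunc t (f ω)) ^ 2 ∂P := by
  set T := fun ω => trunc t (f ω) with hT_def
  set R := fun ω => f ω - T ω with hR_def
  have hT : MemLp T 2 P := memLp_trunc hf t
  have hR : MemLp R 2 P := hf.sub hT
  set m := ∫ ω, T ω ∂P
  set v := ∫ ω, (T ω - m) ^ 2 ∂P
  have hmR : ∫ ω, R ω ∂P = -m := by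
    rw [integral_sub (hf.integrable one_le_two) (hT.integrable one_le_two), hmean, zero_sub]
  have hsplit : ∫ ω, T ω ^ 2 ∂P + ∫ ω, R ω ^ 2 ∂P = c ^ 2 := by
    rw [← integral_add hT.integrable_sq hR.integrable_sq, ← hvar]
    exact integral_congr_ae (ae_of_all _ fun ω => sq_trunc_add_sq_sub_trunc t (f ω))
  have hvarT : v = ∫ ω, T ω ^ 2 ∂P - m ^ 2 := by
    rw [show v = Var[T; P] from (variance_eq_integral hT.aemeasurable).symm, variance_eq_sub hT]
    rfl
  have hvarR : ∫ ω, (R ω + m) ^ 2 ∂P = ∫ ω, R ω ^ 2 ∂P - m ^ 2 := by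
    have := variance_eq_sub hR
    rw [variance_eq_integral hR.aemeasurable, hmR] at this
    simpa [sub_neg_eq_add, neg_sq] using this
  have hk : (1 - c / √v) ^ 2 * v ≤ ∫ ω, R ω ^ 2 ∂P + m ^ 2 := by
    have hv : 0 ≤ v := integral_nonneg fun ω => sq_nonneg _
    have hR2 : 0 ≤ ∫ ω, R ω ^ 2 ∂P := integral_nonneg fun ω => sq_nonneg _
    have := one_sub_div_sqrt_sq_mul_le hc hv (by nlinarith)
    linarith
  have hdecomp : ∀ ω, f ω - truncNormalize P c t f ω = (R ω + m) + (1 - c / √v) * (T ω - m) := by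
    intro ω; simp only [truncNormalize, hR_def, hT_def]; ring
  calc ∫ ω, (f ω - truncNormalize P c t f ω) ^ 2 ∂P
      = ∫ ω, ((R ω + m) + (1 - c / √v) * (T ω - m)) ^ 2 ∂P := by simp_rw [hdecomp]
    _ ≤ 2 * ∫ ω, (R ω + m) ^ 2 ∂P + 2 * ∫ ω, ((1 - c / √v) * (T ω - m)) ^ 2 ∂P :=
        integral_add_sq_le (hR.add (memLp_const m)) ((hT.sub (memLp_const m)).const_mul _)
    _ = 2 * (∫ ω, R ω ^ 2 ∂P - m ^ 2) + 2 * ((1 - c / √v) ^ 2 * v) := by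
        simp_rw [hvarR, mul_pow, integral_const_mul]
        rfl
    _ ≤ 4 * ∫ ω, R ω ^ 2 ∂P := by linarith

theorem integral_sq_sub_truncNormalize_le_tailMoment {Ω' : Type*} [MeasurableSpace Ω']
    {P' : Measure Ω'} [IsProbabilityMeasure P'] {η : Ω' → ℝ} (hid : IdentDistrib f η P P')
    (hη : MemLp η 2 P') (hmean : ∫ ω, η ω ∂P' = 0) {c : ℝ} (hc : 0 ≤ c)
    (hvar : ∫ ω, η ω ^ 2 ∂P' = c ^ 2) (t : ℝ) :
    ∫ ω, (f ω - truncNormalize P c t f ω) ^ 2 ∂P ≤ 4 * tailMoment P' t 2 η := by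
  have hmean' : ∫ ω, f ω ∂P = 0 := hid.integral_eq ▸ hmean
  have hvar' : ∫ ω, f ω ^ 2 ∂P = c ^ 2 := (hid.comp (measurable_id.pow_const 2)).integral_eq ▸ hvar
  calc ∫ ω, (f ω - truncNormalize P c t f ω) ^ 2 ∂P
      ≤ 4 * ∫ ω, (f ω - trunc t (f ω)) ^ 2 ∂P :=
        integral_sq_sub_truncNormalize_le (hid.memLp_iff.2 hη) hmean' hc hvar' t
    _ = 4 * tailMoment P' t 2 η := by rw [integral_sq_sub_trunc, hid.tailMoment_eq]

end

lemma memLp_of_lintegral_abs_rpow_lt_top {Ω : Type*} [MeasurableSpace Ω] {P : Measure Ω}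
    [IsFiniteMeasure P] {η : Ω → ℝ} (hη : AEStronglyMeasurable η P) {p : ℝ} {k : ℕ}
    (hk : k ≠ 0) (hkp : (k : ℝ) ≤ p) (h : ∫⁻ ω, ENNReal.ofReal (|η ω| ^ p) ∂P < ⊤) :
    MemLp η k P := by
  have hint : Integrable (fun ω => ‖η ω‖ ^ p) P :=
    ⟨(hη.norm.aemeasurable.pow_const p).aestronglyMeasurable,
      (hasFiniteIntegral_iff_ofReal (ae_of_all _ fun _ => by positivity)).2 (by simpa using h)⟩
  rw [← integrable_norm_rpow_iff hη (by exact_mod_cast hk) (ENNReal.natCast_ne_top k)]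
  simpa using integrable_norm_rpow_of_le hη k.cast_nonneg (k.cast_nonneg.trans hkp) hkp hint

lemma trace_mul_transpose_self {m n : Type*} [Fintype m] [Fintype n] (M : Matrix m n ℝ) :
    (M * M.transpose).trace = ∑ i, ∑ j, M i j ^ 2 := by
  simp [Matrix.trace, Matrix.mul_apply, sq]

lemma trace_mul_transpose_self_nonneg {m n : Type*} [Fintype m] [Fintype n] (M : Matrix m n ℝ) :
    0 ≤ (M * M.transpose).trace := by
  rw [trace_mul_transpose_self]; positivity

lemma opNorm_le_sqrt_trace_mul_transpose {N : ℕ} (M : Matrix (Fin N) (Fin N) ℝ) :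
    opNorm M ≤ √(M * M.transpose).trace := by
  rw [trace_mul_transpose_self]
  refine ContinuousLinearMap.opNorm_le_bound _ (Real.sqrt_nonneg _) fun x => ?_
  rw [LinearMap.coe_toContinuousLinearMap', EuclideanSpace.norm_eq, EuclideanSpace.norm_eq,
    ← Real.sqrt_mul (by positivity)]
  refine Real.sqrt_le_sqrt ?_
  simp only [Real.norm_eq_abs, sq_abs]
  rw [Finset.sum_mul]
  exact Finset.sum_le_sum fun i _ => Finset.sum_mul_sq_le_sq_mul_sq Finset.univ (M i) x.ofLp

section

variable {Ω : Type*} [MeasurableSpace Ω] {P : Measure Ω} {N : ℕ}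
  {M : Ω → Matrix (Fin N) (Fin N) ℝ}

lemma integral_trace_mul_transpose_nonneg (M : Ω → Matrix (Fin N) (Fin N) ℝ) :
    0 ≤ ∫ ω, (M ω * (M ω).transpose).trace ∂P :=
  integral_nonneg fun _ => trace_mul_transpose_self_nonneg _

lemma integrable_trace_mul_transpose (hM : ∀ i j, MemLp (fun ω => M ω i j) 2 P) :
    Integrable (fun ω => (M ω * (M ω).transpose).trace) P := by
  simp_rw [trace_mul_transpose_self]
  exact integrable_finsetSum _ fun i _ => integrable_finsetSum _ fun j _ => (hM i j).integrable_sq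

lemma integral_trace_mul_transpose (hM : ∀ i j, MemLp (fun ω => M ω i j) 2 P) :
    ∫ ω, (M ω * (M ω).transpose).trace ∂P = ∑ i, ∑ j, ∫ ω, M ω i j ^ 2 ∂P := by
  simp_rw [trace_mul_transpose_self]
  rw [integral_finsetSum _ fun i _ => integrable_finsetSum _ fun j _ => (hM i j).integrable_sq]
  exact Finset.sum_congr rfl fun i _ =>
    integral_finsetSum _ fun j _ => (hM i j).integrable_sq

lemma measureReal_lt_opNorm_le [IsFiniteMeasure P] (hM : ∀ i j, MemLp (fun ω => M ω i j) 2 P)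
    {r : ℝ} (hr : 0 < r) :
    (P {ω | r < opNorm (M ω)}).toReal ≤ (r ^ 2)⁻¹ * ∫ ω, (M ω * (M ω).transpose).trace ∂P := by
  rw [le_inv_mul_iff₀ (by positivity), ← measureReal_def]
  calc r ^ 2 * P.real {ω | r < opNorm (M ω)}
      ≤ r ^ 2 * P.real {ω | r ^ 2 ≤ (M ω * (M ω).transpose).trace} := by
        gcongr with ω
        · finiteness
        exact fun hω =>
          ((Real.lt_sqrt hr.le).1 (hω.trans_le (opNorm_le_sqrt_trace_mul_transpose _))).le
    _ ≤ ∫ ω, (M ω * (M ω).transpose).trace ∂P :=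
        mul_meas_ge_le_integral_of_nonneg
          (ae_of_all _ fun ω => trace_mul_transpose_self_nonneg _)
          (integrable_trace_mul_transpose hM) _

end

lemma rpow_truncation_level_scaling {x : ℝ} (hx : 0 < x) (ε : ℝ) :
    x * x ^ (2 * ε) * ((x ^ (-ε) * √x) ^ 2)⁻¹ = x ^ (4 * ε) ∧
      x * x ^ (2 * ε) * (x * ((x ^ (-ε) * √x) ^ 4)⁻¹) = x ^ (6 * ε) := by
  have hpow (k : ℕ) : x ^ ((k : ℝ) * ε) = (x ^ ε) ^ k := by
    rw [mul_comm, Real.rpow_mul_natCast hx.le]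
  have h2 := hpow 2; have h4 := hpow 4; have h6 := hpow 6
  push_cast at h2 h4 h6
  have hsq : (x ^ (-ε) * √x) ^ 2 = x / (x ^ ε) ^ 2 := by
    rw [mul_pow, Real.sq_sqrt hx.le, Real.rpow_neg hx.le]; field_simp
  have hpos : 0 < x ^ ε := Real.rpow_pos_of_pos hx ε
  rw [h2, h4, h6, show (x ^ (-ε) * √x) ^ 4 = ((x ^ (-ε) * √x) ^ 2) ^ 2 by ring, hsq]
  constructor <;> field_simp

section Elliptic

variable {Ω Ω' : Type*} [MeasurableSpace Ω] [MeasurableSpace Ω'] {P : Measure Ω}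
  {P' : Measure Ω'} {ξ₁ ξ₂ ζ : Ω' → ℝ} {n : ℕ} {Y : Ω → Matrix (Fin n) (Fin n) ℝ}

lemma _root_.IsEllipticRM.identDistrib_of_lt (hY : IsEllipticRM P P' ξ₁ ξ₂ ζ Y) {i j : Fin n}
    (h : i < j) : IdentDistrib (fun ω => Y ω i j) ξ₁ P P' :=
  (hY.2.1 ⟨(i, j), h⟩).comp measurable_fst

lemma _root_.IsEllipticRM.identDistrib_of_gt (hY : IsEllipticRM P P' ξ₁ ξ₂ ζ Y) {i j : Fin n}
    (h : j < i) : IdentDistrib (fun ω => Y ω i j) ξ₂ P P' :=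
  (hY.2.1 ⟨(j, i), h⟩).comp measurable_snd

lemma _root_.IsEllipticRM.memLp_apply (hY : IsEllipticRM P P' ξ₁ ξ₂ ζ Y) (h₁ : MemLp ξ₁ 2 P')
    (h₂ : MemLp ξ₂ 2 P') (hζ : MemLp ζ 2 P') (i j : Fin n) :
    MemLp (fun ω => Y ω i j) 2 P := by
  rcases lt_trichotomy i j with h | rfl | h
  · exact (hY.identDistrib_of_lt h).memLp_iff.2 h₁
  · exact (hY.2.2 i).memLp_iff.2 hζ
  · exact (hY.identDistrib_of_gt h).memLp_iff.2 h₂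

variable [IsProbabilityMeasure P] {σ t : ℝ} {Ŷ : Ω → Matrix (Fin n) (Fin n) ℝ}

lemma _root_.IsEllipticRM.memLp_smul_sub (hY : IsEllipticRM P P' ξ₁ ξ₂ ζ Y)
    (h₁ : MemLp ξ₁ 2 P') (h₂ : MemLp ξ₂ 2 P') (hζ : MemLp ζ 2 P')
    (hŶ : ∀ ω i j, Ŷ ω i j = truncNormalize P (if i = j then σ else 1) t (fun ω => Y ω i j) ω)
    (a : ℝ) (i j : Fin n) : MemLp (fun ω => (a • (Y ω - Ŷ ω)) i j) 2 P := by
  simp only [Matrix.smul_apply, Matrix.sub_apply, smul_eq_mul, hŶ]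
  have hYij := hY.memLp_apply h₁ h₂ hζ i j
  exact (hYij.sub (memLp_truncNormalize hYij _ t)).const_mul a

lemma _root_.IsEllipticRM.mul_measureReal_lt_opNorm_le (hY : IsEllipticRM P P' ξ₁ ξ₂ ζ Y)
    (h₁ : MemLp ξ₁ 2 P') (h₂ : MemLp ξ₂ 2 P') (hζ : MemLp ζ 2 P') (hn : n ≠ 0)
    (hŶ : ∀ ω i j, Ŷ ω i j = truncNormalize P (if i = j then σ else 1) t (fun ω => Y ω i j) ω)
    (ε : ℝ) :
    n * (P {ω | (n : ℝ) ^ (-ε) < opNorm ((√n)⁻¹ • (Y ω - Ŷ ω))}).toReal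
      ≤ n * n ^ (2 * ε) *
        ∫ ω, (((√n)⁻¹ • (Y ω - Ŷ ω)) * ((√n)⁻¹ • (Y ω - Ŷ ω)).transpose).trace ∂P := by
  have hn' : (0 : ℝ) < n := by positivity
  have hr : (((n : ℝ) ^ (-ε)) ^ 2)⁻¹ = n ^ (2 * ε) := by
    rw [← Real.rpow_natCast, ← Real.rpow_mul hn'.le, ← Real.rpow_neg hn'.le]
    ring_nf
  rw [mul_assoc, ← hr]
  gcongr
  exact measureReal_lt_opNorm_le (hY.memLp_smul_sub h₁ h₂ hζ hŶ _) (by positivity)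

variable [IsProbabilityMeasure P']

lemma _root_.CondC0.memLp {σ2 : ℝ} (hC0 : CondC0 P' ξ₁ ξ₂ ζ σ2)
    (h₁ : AEStronglyMeasurable ξ₁ P') (h₂ : AEStronglyMeasurable ξ₂ P')
    (hζ : AEStronglyMeasurable ζ P') : MemLp ξ₁ 6 P' ∧ MemLp ξ₂ 6 P' ∧ MemLp ζ 4 P' := by
  obtain ⟨-, -, -, -, -, -, τ, hτ, hfin₁, hfin₂, hfinζ⟩ := hC0
  exact ⟨memLp_of_lintegral_abs_rpow_lt_top h₁ (by norm_num) (by push_cast; linarith) hfin₁,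
    memLp_of_lintegral_abs_rpow_lt_top h₂ (by norm_num) (by push_cast; linarith) hfin₂,
    memLp_of_lintegral_abs_rpow_lt_top hζ (by norm_num) (by push_cast; linarith) hfinζ⟩

lemma _root_.IsEllipticRM.integral_sq_sub_truncNormalize_le (hY : IsEllipticRM P P' ξ₁ ξ₂ ζ Y)
    (hC0 : CondC0 P' ξ₁ ξ₂ ζ (σ ^ 2)) (hσ : 0 ≤ σ) (h₁ : MemLp ξ₁ 2 P') (h₂ : MemLp ξ₂ 2 P')
    (hζ : MemLp ζ 2 P') (t : ℝ) (i j : Fin n) :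
    ∫ ω, (Y ω i j - truncNormalize P (if i = j then σ else 1) t (fun ω => Y ω i j) ω) ^ 2 ∂P
      ≤ 4 * (if i = j then tailMoment P' t 2 ζ
          else tailMoment P' t 2 ξ₁ + tailMoment P' t 2 ξ₂) := by
  obtain ⟨hm₁, hm₂, hv₁, hv₂, hmζ, hvζ, -⟩ := hC0
  have hT₁ := tailMoment_nonneg (P := P') t 2 ξ₁
  have hT₂ := tailMoment_nonneg (P := P') t 2 ξ₂
  rcases lt_trichotomy i j with h | rfl | h
  · simp only [h.ne, if_false]
    have := integral_sq_sub_truncNormalize_le_tailMoment (hY.identDistrib_of_lt h) h₁ hm₁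
      zero_le_one (by rw [hv₁, one_pow]) t
    linarith
  · simpa using integral_sq_sub_truncNormalize_le_tailMoment (hY.2.2 i) hζ hmζ hσ hvζ t
  · simp only [h.ne', if_false]
    have := integral_sq_sub_truncNormalize_le_tailMoment (hY.identDistrib_of_gt h) h₂ hm₂
      zero_le_one (by rw [hv₂, one_pow]) t
    linarith

theorem _root_.IsEllipticRM.integral_trace_le (hY : IsEllipticRM P P' ξ₁ ξ₂ ζ Y)
    (hC0 : CondC0 P' ξ₁ ξ₂ ζ (σ ^ 2)) (hσ : 0 ≤ σ) (h₁ : MemLp ξ₁ 2 P') (h₂ : MemLp ξ₂ 2 P')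
    (hζ : MemLp ζ 2 P') (hn : n ≠ 0)
    (hŶ : ∀ ω i j, Ŷ ω i j = truncNormalize P (if i = j then σ else 1) t (fun ω => Y ω i j) ω) :
    ∫ ω, (((√n)⁻¹ • (Y ω - Ŷ ω)) * ((√n)⁻¹ • (Y ω - Ŷ ω)).transpose).trace ∂P
      ≤ 4 * (tailMoment P' t 2 ζ + n * (tailMoment P' t 2 ξ₁ + tailMoment P' t 2 ξ₂)) := by
  have hT₁ := tailMoment_nonneg (P := P') t 2 ξ₁
  have hT₂ := tailMoment_nonneg (P := P') t 2 ξ₂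
  rw [integral_trace_mul_transpose (hY.memLp_smul_sub h₁ h₂ hζ hŶ _)]
  simp only [Matrix.smul_apply, Matrix.sub_apply, smul_eq_mul, mul_pow, integral_const_mul,
    ← Finset.mul_sum, hŶ, inv_pow, Real.sq_sqrt n.cast_nonneg]
  calc (n : ℝ)⁻¹ * ∑ i, ∑ j, ∫ ω, (Y ω i j -
        truncNormalize P (if i = j then σ else 1) t (fun ω => Y ω i j) ω) ^ 2 ∂P
      ≤ (n : ℝ)⁻¹ * ∑ i : Fin n, ∑ j : Fin n,
          4 * ((if i = j then tailMoment P' t 2 ζ else 0) +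
            (tailMoment P' t 2 ξ₁ + tailMoment P' t 2 ξ₂)) := by
        gcongr with i _ j _
        refine (hY.integral_sq_sub_truncNormalize_le hC0 hσ h₁ h₂ hζ t i j).trans ?_
        split_ifs <;> linarith
    _ = 4 * (tailMoment P' t 2 ζ + n * (tailMoment P' t 2 ξ₁ + tailMoment P' t 2 ξ₂)) := by
        simp only [← Finset.mul_sum, Finset.sum_add_distrib, Finset.sum_ite_eq, Finset.mem_univ,
          if_true, Finset.sum_const, Finset.card_univ, Fintype.card_fin, nsmul_eq_mul]
        field_simp

theorem _root_.IsEllipticRM.mul_rpow_integral_trace_le (hY : IsEllipticRM P P' ξ₁ ξ₂ ζ Y)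
    (hC0 : CondC0 P' ξ₁ ξ₂ ζ (σ ^ 2)) (hσ : 0 ≤ σ) (h₁ : MemLp ξ₁ 6 P') (h₂ : MemLp ξ₂ 6 P')
    (hζ : MemLp ζ 4 P') (hn : n ≠ 0) {ε : ℝ}
    (hŶ : ∀ ω i j, Ŷ ω i j =
      truncNormalize P (if i = j then σ else 1) (n ^ (-ε) * √n) (fun ω => Y ω i j) ω) :
    n * n ^ (2 * ε) *
        ∫ ω, (((√n)⁻¹ • (Y ω - Ŷ ω)) * ((√n)⁻¹ • (Y ω - Ŷ ω)).transpose).trace ∂P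
      ≤ 4 * (n ^ (6 * ε) * tailMoment P' (n ^ (-ε) * √n) 6 ξ₁)
        + 4 * (n ^ (6 * ε) * tailMoment P' (n ^ (-ε) * √n) 6 ξ₂)
        + 4 * (n ^ (4 * ε) * tailMoment P' (n ^ (-ε) * √n) 4 ζ) := by
  have hn' : (0 : ℝ) < n := by positivity
  set t : ℝ := n ^ (-ε) * √n
  have ht : 0 < t := by positivity
  have h₁t := tailMoment_two_le (d := 4) (by simpa using h₁) ht
  have h₂t := tailMoment_two_le (d := 4) (by simpa using h₂) ht
  have hζt := tailMoment_two_le (d := 2) (by simpa using hζ) ht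
  obtain ⟨hscale₂, hscale₄⟩ := rpow_truncation_level_scaling hn' ε
  calc (n : ℝ) * n ^ (2 * ε) *
        ∫ ω, (((√n)⁻¹ • (Y ω - Ŷ ω)) * ((√n)⁻¹ • (Y ω - Ŷ ω)).transpose).trace ∂P
      ≤ n * n ^ (2 * ε) *
          (4 * (tailMoment P' t 2 ζ + n * (tailMoment P' t 2 ξ₁ + tailMoment P' t 2 ξ₂))) := by
        gcongr
        exact hY.integral_trace_le hC0 hσ (h₁.mono_exponent (by norm_num))
          (h₂.mono_exponent (by norm_num)) (hζ.mono_exponent (by norm_num)) hn hŶ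
    _ ≤ n * n ^ (2 * ε) * (4 * ((t ^ 2)⁻¹ * tailMoment P' t 4 ζ +
          n * ((t ^ 4)⁻¹ * tailMoment P' t 6 ξ₁ + (t ^ 4)⁻¹ * tailMoment P' t 6 ξ₂))) := by
        gcongr
    _ = _ := by
        linear_combination (4 * tailMoment P' t 4 ζ) * hscale₂ +
          (4 * (tailMoment P' t 6 ξ₁ + tailMoment P' t 6 ξ₂)) * hscale₄

end Elliptic

end

end EllipticTruncation

open EllipticTruncation in
theorem stmt9_general
    (Ω' : Type) [MeasurableSpace Ω'] (P' : Measure Ω') [IsProbabilityMeasure P']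
    (ξ₁ ξ₂ ζ : Ω' → ℝ) (σ : ℝ) (hσ : 0 ≤ σ)
    (hC0 : CondC0 P' ξ₁ ξ₂ ζ (σ ^ 2))
    (ε : ℝ)
    (hlim₁ : Tendsto (fun n : ℕ => (n : ℝ) ^ (6 * ε) *
      ∫ ω, (if (n : ℝ) ^ (-ε) * Real.sqrt n < |ξ₁ ω| then |ξ₁ ω| ^ 6 else 0) ∂P')
      atTop (𝓝 0))
    (hlim₂ : Tendsto (fun n : ℕ => (n : ℝ) ^ (6 * ε) *
      ∫ ω, (if (n : ℝ) ^ (-ε) * Real.sqrt n < |ξ₂ ω| then |ξ₂ ω| ^ 6 else 0) ∂P')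
      atTop (𝓝 0))
    (hlimζ : Tendsto (fun n : ℕ => (n : ℝ) ^ (4 * ε) *
      ∫ ω, (if (n : ℝ) ^ (-ε) * Real.sqrt n < |ζ ω| then |ζ ω| ^ 4 else 0) ∂P')
      atTop (𝓝 0))
    (Ω : ℕ → Type) [∀ n, MeasurableSpace (Ω n)] (P : ∀ n, Measure (Ω n))
    [∀ n, IsProbabilityMeasure (P n)]
    (Y : ∀ n : ℕ, Ω n → Matrix (Fin n) (Fin n) ℝ)
    (hell : ∀ n, IsEllipticRM (P n) P' ξ₁ ξ₂ ζ (Y n))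
    (tY : ∀ n : ℕ, Ω n → Matrix (Fin n) (Fin n) ℝ)
    (htY : ∀ n ω i j, tY n ω i j =
      (if |Y n ω i j| ≤ (n : ℝ) ^ (-ε) * Real.sqrt n then Y n ω i j else 0)
        - ∫ ω', (if |Y n ω' i j| ≤ (n : ℝ) ^ (-ε) * Real.sqrt n then Y n ω' i j else 0) ∂(P n))
    (hY : ∀ n : ℕ, Ω n → Matrix (Fin n) (Fin n) ℝ)
    (hhY : ∀ n ω i j, hY n ω i j =
      (if i = j then σ else 1) * tY n ω i j
        / Real.sqrt (∫ ω', (tY n ω' i j) ^ 2 ∂(P n))) :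
    Tendsto (fun n : ℕ => (n : ℝ) * (n : ℝ) ^ (2 * ε) *
        ∫ ω, Matrix.trace
          (((Real.sqrt n)⁻¹ • (Y n ω - hY n ω)) *
            ((Real.sqrt n)⁻¹ • (Y n ω - hY n ω)).transpose) ∂(P n))
      atTop (𝓝 0) ∧
    Tendsto (fun n : ℕ => (n : ℝ) *
        ((P n) {ω | (n : ℝ) ^ (-ε) <
          opNorm ((Real.sqrt n)⁻¹ • (Y n ω - hY n ω))}).toReal)
      atTop (𝓝 0) := by
  -- `CondC0` does not make the atoms measurable; their laws are those of entries of `Y 1`, `Y 2`.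
  have hξ : AEMeasurable (fun ω' => (ξ₁ ω', ξ₂ ω')) P' :=
    ((hell 2).2.1 ⟨(0, 1), by decide⟩).aemeasurable_snd
  obtain ⟨h₁, h₂, hζ⟩ := hC0.memLp hξ.fst.aestronglyMeasurable hξ.snd.aestronglyMeasurable
    ((hell 1).2.2 0).aemeasurable_snd.aestronglyMeasurable
  have hŶ : ∀ n ω i j, hY n ω i j = truncNormalize (P n) (if i = j then σ else 1)
      ((n : ℝ) ^ (-ε) * √n) (fun ω => Y n ω i j) ω := fun n ω i j => by
    simp only [hhY, htY]; rfl
  have hlim := ((hlim₁.const_mul 4).add (hlim₂.const_mul 4)).add (hlimζ.const_mul 4)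
  have hfrob := tendsto_of_tendsto_of_tendsto_of_le_of_le' tendsto_const_nhds
    (by simpa [tailMoment] using hlim)
    (Eventually.of_forall fun n => mul_nonneg (by positivity)
      (integral_trace_mul_transpose_nonneg _))
    ((eventually_ne_atTop 0).mono fun n hn =>
      (hell n).mul_rpow_integral_trace_le hC0 hσ h₁ h₂ hζ hn (hŶ n))
  refine ⟨hfrob, tendsto_of_tendsto_of_tendsto_of_le_of_le' tendsto_const_nhds hfrob
    (Eventually.of_forall fun n => by positivity) ((eventually_ne_atTop 0).mono fun n hn => ?_)⟩
  exact (hell n).mul_measureReal_lt_opNorm_le (h₁.mono_exponent (by norm_num))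
    (h₂.mono_exponent (by norm_num)) (hζ.mono_exponent (by norm_num)) hn (hŶ n) ε

/-- Truncation lemma: the truncated-and-rescaled matrix `X̂_N` is close to `X_N = Y_N/√N` in
Frobenius norm in expectation, and in operator norm with probability `1 − o(N⁻¹)`. -/
theorem stmt9
    (Ω' : Type) [MeasurableSpace Ω'] (P' : Measure Ω') [IsProbabilityMeasure P']
    (ξ₁ ξ₂ ζ : Ω' → ℝ) (σ : ℝ) (hσ : 0 ≤ σ)
    (hC0 : CondC0 P' ξ₁ ξ₂ ζ (σ ^ 2))
    (ε : ℝ) (hε : 0 < ε)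
    (hlim₁ : Tendsto (fun n : ℕ => (n : ℝ) ^ (6 * ε) *
      ∫ ω, (if (n : ℝ) ^ (-ε) * Real.sqrt n < |ξ₁ ω| then |ξ₁ ω| ^ 6 else 0) ∂P')
      atTop (𝓝 0))
    (hlim₂ : Tendsto (fun n : ℕ => (n : ℝ) ^ (6 * ε) *
      ∫ ω, (if (n : ℝ) ^ (-ε) * Real.sqrt n < |ξ₂ ω| then |ξ₂ ω| ^ 6 else 0) ∂P')
      atTop (𝓝 0))
    (hlimζ : Tendsto (fun n : ℕ => (n : ℝ) ^ (4 * ε) *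
      ∫ ω, (if (n : ℝ) ^ (-ε) * Real.sqrt n < |ζ ω| then |ζ ω| ^ 4 else 0) ∂P')
      atTop (𝓝 0))
    (Ω : ℕ → Type) [∀ n, MeasurableSpace (Ω n)] (P : ∀ n, Measure (Ω n))
    [∀ n, IsProbabilityMeasure (P n)]
    (Y : ∀ n : ℕ, Ω n → Matrix (Fin n) (Fin n) ℝ)
    (hell : ∀ n, IsEllipticRM (P n) P' ξ₁ ξ₂ ζ (Y n))
    (tY : ∀ n : ℕ, Ω n → Matrix (Fin n) (Fin n) ℝ)
    (htY : ∀ n ω i j, tY n ω i j =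
      (if |Y n ω i j| ≤ (n : ℝ) ^ (-ε) * Real.sqrt n then Y n ω i j else 0)
        - ∫ ω', (if |Y n ω' i j| ≤ (n : ℝ) ^ (-ε) * Real.sqrt n then Y n ω' i j else 0) ∂(P n))
    (hY : ∀ n : ℕ, Ω n → Matrix (Fin n) (Fin n) ℝ)
    (hhY : ∀ n ω i j, hY n ω i j =
      (if i = j then σ else 1) * tY n ω i j
        / Real.sqrt (∫ ω', (tY n ω' i j) ^ 2 ∂(P n))) :
    Tendsto (fun n : ℕ => (n : ℝ) * (n : ℝ) ^ (2 * ε) *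
        ∫ ω, Matrix.trace
          (((Real.sqrt n)⁻¹ • (Y n ω - hY n ω)) *
            ((Real.sqrt n)⁻¹ • (Y n ω - hY n ω)).transpose) ∂(P n))
      atTop (𝓝 0) ∧
    Tendsto (fun n : ℕ => (n : ℝ) *
        ((P n) {ω | (n : ℝ) ^ (-ε) <
          opNorm ((Real.sqrt n)⁻¹ • (Y n ω - hY n ω))}).toReal)
      atTop (𝓝 0) :=
  stmt9_general Ω' P' ξ₁ ξ₂ ζ σ hσ hC0 ε hlim₁ hlim₂ hlimζ Ω P Y hell tY htY hY hhY
end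

section
/- Let (ξ₁,ξ₂) be a random vector in ℝ² such that ξ₁ and ξ₂ each have mean zero and unit variance and E|ξ₁|^{6+τ} + E|ξ₂|^{6+τ} < ∞ for some τ > 0, and set ρ := E[ξ₁ξ₂]. Let ε > 0 be such that N^{6ε}·E[|ξ_i|⁶ 1_{|ξ_i| > N^{1/2−ε}}] → 0 for i = 1,2. For each N define ξ̃_i := ξ_i·1_{|ξ_i| ≤ N^{1/2−ε}} − E[ξ_i·1_{|ξ_i| ≤ N^{1/2−ε}}] and, for N large enough that Var(ξ̃_i) > 0, define ξ̂_i := ξ̃_i/√Var(ξ̃_i) and ρ̂_N := E[ξ̂₁ ξ̂₂]. Then N·(ρ̂_N − ρ) → 0 as N → ∞. -/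
/-!
Truncation at `t = N^(1/2-ε)` costs little. Put `δ = E[|ξ|⁶; |ξ| > t]`; by Markov-type bounds
`E[ξ²; |ξ| > t] ≤ δ / t⁴`, and since `E ξ = 0` the truncated mean satisfies
`|E[ξ; |ξ| ≤ t]| ≤ E[|ξ|; |ξ| > t] ≤ δ / t⁵`. So the truncated variance is
`1 - O(δ / t⁴) - O(δ² / t¹⁰)`. For the covariance, AM-GM with weight `N^(1+2ε)` bounds the change
in `E[ξ₁ξ₂]`. Every one of these errors is `o(1/N)` because `N^(6ε) δ → 0`. Finally, the
normalized correlation `c / (√u √w)` is a differentiable function of `(c, u, w)` near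
`(ρ, 1, 1)`, so it converges at the same rate.
-/

open MeasureTheory Filter Topology ProbabilityTheory

noncomputable def truncAt (t x : ℝ) : ℝ := if |x| ≤ t then x else 0

noncomputable def tailMoment {Ω : Type*} [MeasurableSpace Ω] (P : Measure Ω) (ξ : Ω → ℝ)
    (k : ℕ) (t : ℝ) : ℝ :=
  ∫ ω, (if t < |ξ ω| then |ξ ω| ^ k else 0) ∂P

lemma measurable_truncAt (t : ℝ) : Measurable (truncAt t) :=
  Measurable.ite (measurableSet_le measurable_abs measurable_const) measurable_id measurable_const

lemma abs_truncAt_le (t x : ℝ) : |truncAt t x| ≤ |x| := by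
  unfold truncAt; split_ifs <;> simp

lemma truncAt_add_ite_lt (t x : ℝ) : truncAt t x + (if t < |x| then x else 0) = x := by
  unfold truncAt; split_ifs <;> linarith

lemma truncAt_sq_add_ite_lt (t x : ℝ) :
    truncAt t x ^ 2 + (if t < |x| then |x| ^ 2 else 0) = x ^ 2 := by
  unfold truncAt; split_ifs <;> first | linarith | simp

lemma abs_truncAt_mul_truncAt_sub_mul_le (t x y : ℝ) {a : ℝ} (ha : 0 < a) :
    |truncAt t x * truncAt t y - x * y| ≤
      a / 2 * ((if t < |x| then |x| ^ 2 else 0) + (if t < |y| then |y| ^ 2 else 0))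
        + (x ^ 2 + y ^ 2) / (2 * a) := by
  have amgm : ∀ u v : ℝ, |u * v| ≤ a / 2 * |u| ^ 2 + v ^ 2 / (2 * a) := fun u v => by
    have key : a / 2 * |u| ^ 2 + |v| ^ 2 / (2 * a) - |u| * |v| =
        (a * |u| - |v|) ^ 2 / (2 * a) := by
      field_simp; ring
    rw [abs_mul, ← sq_abs v]
    linarith [(by positivity : 0 ≤ (a * |u| - |v|) ^ 2 / (2 * a))]
  have hx : 0 ≤ x ^ 2 / (2 * a) := by positivity
  have hy : 0 ≤ y ^ 2 / (2 * a) := by positivity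
  unfold truncAt
  rcases le_or_gt |x| t with h₁ | h₁ <;> rcases le_or_gt |y| t with h₂ | h₂ <;>
    simp only [h₁, h₂, if_true, if_false, not_lt.2, not_le.2, sub_self, abs_zero, zero_mul,
      mul_zero, zero_sub, abs_neg, add_zero, zero_add, add_div]
  · positivity
  · have := amgm y x
    rw [mul_comm y x, add_comm (a / 2 * _)] at this
    linarith
  · linarith [amgm x y]
  · linarith [amgm x y, (by positivity : 0 ≤ a / 2 * |y| ^ 2)]

section Truncation

variable {Ω : Type*} [MeasurableSpace Ω] {P : Measure Ω} {ξ : Ω → ℝ}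

lemma MeasureTheory.MemLp.truncAt {p : ENNReal} (hξ : MemLp ξ p P) (t : ℝ) :
    MemLp (fun ω => truncAt t (ξ ω)) p P :=
  hξ.mono ((measurable_truncAt t).comp_aemeasurable hξ.aemeasurable).aestronglyMeasurable
    (ae_of_all _ fun ω => by simpa only [Real.norm_eq_abs] using abs_truncAt_le t (ξ ω))

lemma MeasureTheory.MemLp.integrable_abs_pow [IsFiniteMeasure P] {k : ℕ} (hξ : MemLp ξ k P) :
    Integrable (fun ω => |ξ ω| ^ k) P := by
  simpa only [Real.norm_eq_abs] using hξ.integrable_norm_pow'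

lemma MeasureTheory.Integrable.ite_lt_abs {f : Ω → ℝ} (hf : Integrable f P) (hξ : Measurable ξ)
    (t : ℝ) : Integrable (fun ω => if t < |ξ ω| then f ω else 0) P := by
  refine (hf.indicator (measurableSet_lt (measurable_const (a := t)) hξ.abs)).congr
    (ae_of_all _ fun ω => ?_)
  simp [Set.indicator_apply]

lemma memLp_ofReal_of_lintegral_rpow_lt_top {q : ℝ} (hq : 0 < q)
    (hξ : AEStronglyMeasurable ξ P) (h : ∫⁻ ω, ENNReal.ofReal (|ξ ω| ^ q) ∂P < ⊤) :
    MemLp ξ (ENNReal.ofReal q) P := by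
  rw [← integrable_norm_rpow_iff hξ (by simpa using hq) ENNReal.ofReal_ne_top,
    ENNReal.toReal_ofReal hq.le]
  refine ⟨(hξ.norm.aemeasurable.pow_const q).aestronglyMeasurable,
    (hasFiniteIntegral_iff_ofReal (ae_of_all _ fun ω => by positivity)).2 ?_⟩
  simpa only [Real.norm_eq_abs] using h

lemma tailMoment_nonneg (k : ℕ) (t : ℝ) : 0 ≤ tailMoment P ξ k t :=
  integral_nonneg fun ω => by dsimp only; split_ifs <;> positivity

lemma pow_sub_mul_tailMoment_le {j k : ℕ} (hkj : k ≤ j) {t : ℝ} (ht : 0 ≤ t)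
    (hj : Integrable (fun ω => |ξ ω| ^ j) P) (hξ : Measurable ξ) :
    t ^ (j - k) * tailMoment P ξ k t ≤ tailMoment P ξ j t := by
  rw [tailMoment, ← integral_const_mul]
  refine integral_mono_of_nonneg (ae_of_all _ fun ω => ?_) (hj.ite_lt_abs hξ t)
    (ae_of_all _ fun ω => ?_)
  · dsimp only; split_ifs <;> positivity
  · dsimp only
    split_ifs with h
    · calc t ^ (j - k) * |ξ ω| ^ k ≤ |ξ ω| ^ (j - k) * |ξ ω| ^ k := by gcongr
        _ = |ξ ω| ^ j := by rw [← pow_add, Nat.sub_add_cancel hkj]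
    · simp

lemma abs_integral_truncAt_sub_le (hξ : Integrable ξ P) (hξm : Measurable ξ) (t : ℝ) :
    |∫ ω, truncAt t (ξ ω) ∂P - ∫ ω, ξ ω ∂P| ≤ tailMoment P ξ 1 t := by
  have hsplit : ∫ ω, ξ ω ∂P =
      ∫ ω, truncAt t (ξ ω) ∂P + ∫ ω, (if t < |ξ ω| then ξ ω else 0) ∂P := by
    rw [← integral_add (memLp_one_iff_integrable.1 ((memLp_one_iff_integrable.2 hξ).truncAt t))
      (hξ.ite_lt_abs hξm t)]
    simp only [truncAt_add_ite_lt]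
  rw [hsplit, sub_add_cancel_left, abs_neg]
  refine abs_integral_le_integral_abs.trans (integral_mono_of_nonneg
    (ae_of_all _ fun ω => abs_nonneg _)
    (by simpa only [pow_one] using hξ.abs.ite_lt_abs hξm t) (ae_of_all _ fun ω => ?_))
  dsimp only; split_ifs <;> simp

lemma integral_truncAt_sq [IsFiniteMeasure P] (hξ : MemLp ξ 2 P) (hξm : Measurable ξ) (t : ℝ) :
    ∫ ω, truncAt t (ξ ω) ^ 2 ∂P = ∫ ω, ξ ω ^ 2 ∂P - tailMoment P ξ 2 t := by
  rw [tailMoment, eq_sub_iff_add_eq, ← integral_add (hξ.truncAt t).integrable_sq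
    (hξ.integrable_abs_pow.ite_lt_abs hξm t)]
  simp only [truncAt_sq_add_ite_lt]

lemma abs_integral_truncAt_mul_sub_le [IsFiniteMeasure P] {ξ₁ ξ₂ : Ω → ℝ} (hξ₁ : MemLp ξ₁ 2 P)
    (hξ₂ : MemLp ξ₂ 2 P) (hξ₁m : Measurable ξ₁) (hξ₂m : Measurable ξ₂) (t : ℝ) {a : ℝ}
    (ha : 0 < a) :
    |∫ ω, truncAt t (ξ₁ ω) * truncAt t (ξ₂ ω) ∂P - ∫ ω, ξ₁ ω * ξ₂ ω ∂P| ≤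
      a / 2 * (tailMoment P ξ₁ 2 t + tailMoment P ξ₂ 2 t)
        + (∫ ω, ξ₁ ω ^ 2 ∂P + ∫ ω, ξ₂ ω ^ 2 ∂P) / (2 * a) := by
  have htail₁ := hξ₁.integrable_abs_pow.ite_lt_abs hξ₁m t
  have htail₂ := hξ₂.integrable_abs_pow.ite_lt_abs hξ₂m t
  have htail : Integrable (fun ω => (if t < |ξ₁ ω| then |ξ₁ ω| ^ 2 else 0)
      + (if t < |ξ₂ ω| then |ξ₂ ω| ^ 2 else 0)) P := htail₁.add htail₂
  have hbulk : Integrable (fun ω => ξ₁ ω ^ 2 + ξ₂ ω ^ 2) P :=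
    hξ₁.integrable_sq.add hξ₂.integrable_sq
  have hX : Integrable (fun ω => truncAt t (ξ₁ ω) * truncAt t (ξ₂ ω)) P :=
    (hξ₁.truncAt t).integrable_mul (hξ₂.truncAt t)
  have hξ : Integrable (fun ω => ξ₁ ω * ξ₂ ω) P := hξ₁.integrable_mul hξ₂
  rw [← integral_sub hX hξ]
  calc _ ≤ ∫ ω, |truncAt t (ξ₁ ω) * truncAt t (ξ₂ ω) - ξ₁ ω * ξ₂ ω| ∂P :=
        abs_integral_le_integral_abs
    _ ≤ ∫ ω, (a / 2 * ((if t < |ξ₁ ω| then |ξ₁ ω| ^ 2 else 0)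
          + (if t < |ξ₂ ω| then |ξ₂ ω| ^ 2 else 0)) + (ξ₁ ω ^ 2 + ξ₂ ω ^ 2) / (2 * a)) ∂P :=
        integral_mono_of_nonneg (ae_of_all _ fun ω => abs_nonneg _)
          ((htail.const_mul _).add (hbulk.div_const _))
          (ae_of_all _ fun ω => abs_truncAt_mul_truncAt_sub_mul_le t _ _ ha)
    _ = _ := by
        rw [integral_add (htail.const_mul _) (hbulk.div_const _), integral_const_mul,
          integral_add htail₁ htail₂, integral_div,
          integral_add hξ₁.integrable_sq hξ₂.integrable_sq]
        rfl

end Truncation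

lemma rpow_mul_rpow_pow_four {x : ℝ} (hx : 0 < x) (ε : ℝ) :
    x ^ (6 * ε) * (x ^ (1 / 2 - ε)) ^ 4 = x ^ (2 + 2 * ε) := by
  rw [← Real.rpow_natCast, ← Real.rpow_mul hx.le, ← Real.rpow_add hx]
  norm_num
  ring_nf

lemma sqrt_le_rpow_mul_rpow_pow_five {x : ℝ} (hx : 1 ≤ x) {ε : ℝ} (hε : 0 ≤ ε) :
    √x ≤ x ^ (6 * ε) * (x ^ (1 / 2 - ε)) ^ 5 := by
  have hx₀ : 0 < x := by linarith
  rw [Real.sqrt_eq_rpow, ← Real.rpow_natCast, ← Real.rpow_mul hx₀.le, ← Real.rpow_add hx₀]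
  exact Real.rpow_le_rpow_of_exponent_le hx (by norm_num; linarith)

section Asymptotics

variable {Ω : Type*} [MeasurableSpace Ω] {P : Measure Ω} {ξ ξ₁ ξ₂ : Ω → ℝ} {ε : ℝ}

lemma tendsto_rpow_mul_tailMoment_two (h6 : Integrable (fun ω => |ξ ω| ^ 6) P)
    (hξm : Measurable ξ)
    (hD : Tendsto (fun n : ℕ => (n : ℝ) ^ (6 * ε) * tailMoment P ξ 6 ((n : ℝ) ^ (1 / 2 - ε)))
      atTop (𝓝 0)) :
    Tendsto (fun n : ℕ => (n : ℝ) ^ (2 + 2 * ε) * tailMoment P ξ 2 ((n : ℝ) ^ (1 / 2 - ε)))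
      atTop (𝓝 0) := by
  refine squeeze_zero' (Eventually.of_forall fun n => ?_) ?_ hD
  · exact mul_nonneg (by positivity) (tailMoment_nonneg 2 _)
  filter_upwards [eventually_gt_atTop 0] with n hn
  rw [← rpow_mul_rpow_pow_four (Nat.cast_pos.2 hn), mul_assoc]
  gcongr
  exact pow_sub_mul_tailMoment_le (k := 2) (by norm_num) (by positivity) h6 hξm

lemma tendsto_sqrt_mul_integral_truncAt [IsFiniteMeasure P] (hξ : MemLp ξ 6 P)
    (hξm : Measurable ξ) (hmean : ∫ ω, ξ ω ∂P = 0) (hε : 0 ≤ ε)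
    (hD : Tendsto (fun n : ℕ => (n : ℝ) ^ (6 * ε) * tailMoment P ξ 6 ((n : ℝ) ^ (1 / 2 - ε)))
      atTop (𝓝 0)) :
    Tendsto (fun n : ℕ => √(n : ℝ) * ∫ ω, truncAt ((n : ℝ) ^ (1 / 2 - ε)) (ξ ω) ∂P)
      atTop (𝓝 0) := by
  have h1 : Integrable ξ P := memLp_one_iff_integrable.1 (hξ.mono_exponent (by norm_num))
  refine squeeze_zero_norm' ?_ hD
  filter_upwards [eventually_ge_atTop 1] with n hn
  have hmean_le := abs_integral_truncAt_sub_le h1 hξm ((n : ℝ) ^ (1 / 2 - ε))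
  rw [hmean, sub_zero] at hmean_le
  rw [norm_mul, Real.norm_eq_abs, Real.norm_eq_abs, abs_of_nonneg (Real.sqrt_nonneg _)]
  calc √(n : ℝ) * |∫ ω, truncAt ((n : ℝ) ^ (1 / 2 - ε)) (ξ ω) ∂P|
      ≤ (n : ℝ) ^ (6 * ε) * ((n : ℝ) ^ (1 / 2 - ε)) ^ 5
          * tailMoment P ξ 1 ((n : ℝ) ^ (1 / 2 - ε)) :=
        mul_le_mul (sqrt_le_rpow_mul_rpow_pow_five (Nat.one_le_cast.2 hn) hε) hmean_le
          (abs_nonneg _) (by positivity)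
    _ ≤ (n : ℝ) ^ (6 * ε) * tailMoment P ξ 6 ((n : ℝ) ^ (1 / 2 - ε)) := by
        rw [mul_assoc]
        gcongr
        exact pow_sub_mul_tailMoment_le (k := 1) (by norm_num) (by positivity)
          hξ.integrable_abs_pow hξm

lemma tendsto_mul_variance_truncAt_sub_one [IsProbabilityMeasure P] (hξ : MemLp ξ 6 P)
    (hξm : Measurable ξ) (hmean : ∫ ω, ξ ω ∂P = 0) (hvar : ∫ ω, ξ ω ^ 2 ∂P = 1) (hε : 0 ≤ ε)
    (hD : Tendsto (fun n : ℕ => (n : ℝ) ^ (6 * ε) * tailMoment P ξ 6 ((n : ℝ) ^ (1 / 2 - ε)))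
      atTop (𝓝 0)) :
    Tendsto (fun n : ℕ =>
        (n : ℝ) * (Var[fun ω => truncAt ((n : ℝ) ^ (1 / 2 - ε)) (ξ ω); P] - 1))
      atTop (𝓝 0) := by
  have h2 : MemLp ξ 2 P := hξ.mono_exponent (by norm_num)
  have htail : Tendsto (fun n : ℕ => (n : ℝ) * tailMoment P ξ 2 ((n : ℝ) ^ (1 / 2 - ε)))
      atTop (𝓝 0) := by
    refine squeeze_zero' (Eventually.of_forall fun n => ?_) ?_
      (tendsto_rpow_mul_tailMoment_two hξ.integrable_abs_pow hξm hD)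
    · exact mul_nonneg (by positivity) (tailMoment_nonneg 2 _)
    filter_upwards [eventually_ge_atTop 1] with n hn
    gcongr
    · exact tailMoment_nonneg 2 _
    · exact Real.self_le_rpow_of_one_le (Nat.one_le_cast.2 hn) (by linarith)
  have h := (htail.add ((tendsto_sqrt_mul_integral_truncAt hξ hξm hmean hε hD).pow 2)).neg
  rw [zero_pow two_ne_zero, add_zero, neg_zero] at h
  refine h.congr fun n => ?_
  rw [variance_eq_sub (h2.truncAt _), mul_pow, Real.sq_sqrt (Nat.cast_nonneg n)]
  simp only [Pi.pow_apply]
  rw [integral_truncAt_sq h2 hξm, hvar]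
  ring

lemma tendsto_mul_integral_truncAt_mul_sub [IsFiniteMeasure P] (hξ₁ : MemLp ξ₁ 6 P)
    (hξ₂ : MemLp ξ₂ 6 P) (hξ₁m : Measurable ξ₁) (hξ₂m : Measurable ξ₂)
    (hvar₁ : ∫ ω, ξ₁ ω ^ 2 ∂P = 1) (hvar₂ : ∫ ω, ξ₂ ω ^ 2 ∂P = 1) (hε : 0 < ε)
    (hD₁ : Tendsto (fun n : ℕ => (n : ℝ) ^ (6 * ε) * tailMoment P ξ₁ 6 ((n : ℝ) ^ (1 / 2 - ε)))
      atTop (𝓝 0))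
    (hD₂ : Tendsto (fun n : ℕ => (n : ℝ) ^ (6 * ε) * tailMoment P ξ₂ 6 ((n : ℝ) ^ (1 / 2 - ε)))
      atTop (𝓝 0)) :
    Tendsto (fun n : ℕ => (n : ℝ) * (∫ ω, truncAt ((n : ℝ) ^ (1 / 2 - ε)) (ξ₁ ω)
        * truncAt ((n : ℝ) ^ (1 / 2 - ε)) (ξ₂ ω) ∂P - ∫ ω, ξ₁ ω * ξ₂ ω ∂P)) atTop (𝓝 0) := by
  have hlim := (((tendsto_rpow_mul_tailMoment_two hξ₁.integrable_abs_pow hξ₁m hD₁).add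
    (tendsto_rpow_mul_tailMoment_two hξ₂.integrable_abs_pow hξ₂m hD₂)).div_const 2).add
    ((tendsto_rpow_neg_atTop (by positivity : 0 < 2 * ε)).comp tendsto_natCast_atTop_atTop)
  rw [add_zero, add_zero, zero_div] at hlim
  refine squeeze_zero_norm' ?_ hlim
  filter_upwards [eventually_gt_atTop 0] with n hn
  have hn' : (0 : ℝ) < n := Nat.cast_pos.2 hn
  -- the AM-GM weight `a = n ^ (1 + 2ε)` balances the two error terms
  have hbound := abs_integral_truncAt_mul_sub_le (hξ₁.mono_exponent (by norm_num))
    (hξ₂.mono_exponent (by norm_num)) hξ₁m hξ₂m ((n : ℝ) ^ (1 / 2 - ε))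
    (Real.rpow_pos_of_pos hn' (1 + 2 * ε))
  rw [hvar₁, hvar₂] at hbound
  have e₁ : (n : ℝ) * (n : ℝ) ^ (1 + 2 * ε) = (n : ℝ) ^ (2 + 2 * ε) := by
    rw [← Real.rpow_one_add' hn'.le (by positivity)]; ring_nf
  have e₂ : (n : ℝ) / (n : ℝ) ^ (1 + 2 * ε) = (n : ℝ) ^ (-(2 * ε)) := by
    rw [← Real.rpow_one_sub' hn'.le (by linarith : 1 - (1 + 2 * ε) < 0).ne]; ring_nf
  rw [norm_mul, Real.norm_eq_abs, Real.norm_eq_abs, abs_of_pos hn']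
  calc _ ≤ (n : ℝ) * _ := mul_le_mul_of_nonneg_left hbound hn'.le
    _ = _ := by
      rw [Function.comp_apply, ← e₁, ← e₂]
      field_simp
      ring

lemma tendsto_mul_covariance_truncAt_sub [IsProbabilityMeasure P] (hξ₁ : MemLp ξ₁ 6 P)
    (hξ₂ : MemLp ξ₂ 6 P) (hξ₁m : Measurable ξ₁) (hξ₂m : Measurable ξ₂)
    (hmean₁ : ∫ ω, ξ₁ ω ∂P = 0) (hmean₂ : ∫ ω, ξ₂ ω ∂P = 0)
    (hvar₁ : ∫ ω, ξ₁ ω ^ 2 ∂P = 1) (hvar₂ : ∫ ω, ξ₂ ω ^ 2 ∂P = 1) (hε : 0 < ε)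
    (hD₁ : Tendsto (fun n : ℕ => (n : ℝ) ^ (6 * ε) * tailMoment P ξ₁ 6 ((n : ℝ) ^ (1 / 2 - ε)))
      atTop (𝓝 0))
    (hD₂ : Tendsto (fun n : ℕ => (n : ℝ) ^ (6 * ε) * tailMoment P ξ₂ 6 ((n : ℝ) ^ (1 / 2 - ε)))
      atTop (𝓝 0)) :
    Tendsto (fun n : ℕ => (n : ℝ) * (cov[fun ω => truncAt ((n : ℝ) ^ (1 / 2 - ε)) (ξ₁ ω),
        fun ω => truncAt ((n : ℝ) ^ (1 / 2 - ε)) (ξ₂ ω); P] - ∫ ω, ξ₁ ω * ξ₂ ω ∂P))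
      atTop (𝓝 0) := by
  have h := (tendsto_mul_integral_truncAt_mul_sub hξ₁ hξ₂ hξ₁m hξ₂m hvar₁ hvar₂ hε hD₁ hD₂).sub
    ((tendsto_sqrt_mul_integral_truncAt hξ₁ hξ₁m hmean₁ hε.le hD₁).mul
      (tendsto_sqrt_mul_integral_truncAt hξ₂ hξ₂m hmean₂ hε.le hD₂))
  rw [mul_zero, sub_zero] at h
  refine h.congr fun n => ?_
  rw [covariance_eq_sub ((hξ₁.mono_exponent (by norm_num)).truncAt _)
    ((hξ₂.mono_exponent (by norm_num)).truncAt _)]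
  simp only [Pi.mul_apply]
  linear_combination (-(∫ ω, truncAt ((n : ℝ) ^ (1 / 2 - ε)) (ξ₁ ω) ∂P)
    * ∫ ω, truncAt ((n : ℝ) ^ (1 / 2 - ε)) (ξ₂ ω) ∂P) * Real.mul_self_sqrt (Nat.cast_nonneg n)

end Asymptotics

lemma tendsto_mul_sub_comp_of_differentiableAt {α E : Type*} [NormedAddCommGroup E]
    [NormedSpace ℝ E] {l : Filter α} {r : α → ℝ} {x : α → E} {p : E} {F : E → ℝ}
    (hF : DifferentiableAt ℝ F p) (hr : Tendsto r l atTop)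
    (hx : Tendsto (fun a => r a • (x a - p)) l (𝓝 0)) :
    Tendsto (fun a => r a * (F (x a) - F p)) l (𝓝 0) := by
  have hxp : Tendsto x l (𝓝 p) := by
    have h := (tendsto_inv_atTop_zero.comp hr).smul hx
    rw [zero_smul] at h
    refine tendsto_sub_nhds_zero_iff.1 (h.congr' ?_)
    filter_upwards [hr.eventually_ne_atTop 0] with a ha
    simp [smul_smul, inv_mul_cancel₀ ha]
  simpa only [smul_eq_mul, Function.comp_def] using
    ((Asymptotics.isBigO_refl r l).smul (hF.isBigO_sub.comp_tendsto hxp)).trans_tendsto hx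

lemma tendsto_mul_div_sqrt_mul_sqrt_sub {α : Type*} {l : Filter α} {r : α → ℝ}
    (hr : Tendsto r l atTop) {c u w : α → ℝ} {ρ : ℝ}
    (hc : Tendsto (fun a => r a * (c a - ρ)) l (𝓝 0))
    (hu : Tendsto (fun a => r a * (u a - 1)) l (𝓝 0))
    (hw : Tendsto (fun a => r a * (w a - 1)) l (𝓝 0)) :
    Tendsto (fun a => r a * (c a / (√(u a) * √(w a)) - ρ)) l (𝓝 0) := by
  have hF : DifferentiableAt ℝ (fun p : ℝ × ℝ × ℝ => p.1 / (√p.2.1 * √p.2.2)) (ρ, 1, 1) := by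
    fun_prop (disch := norm_num)
  have hx : Tendsto (fun a => r a • ((c a, u a, w a) - (ρ, 1, 1))) l (𝓝 0) := by
    simpa only [Prod.mk_sub_mk, Prod.smul_mk, smul_eq_mul, Prod.mk_zero_zero] using
      hc.prodMk_nhds (hu.prodMk_nhds hw)
  simpa only [Real.sqrt_one, mul_one, div_one] using
    tendsto_mul_sub_comp_of_differentiableAt hF hr hx

/-- The correlation of the truncated, recentered and renormalized atom variables converges to
`ρ` at rate `o(N⁻¹)`. -/
theorem stmt11 (Ω : Type) [MeasurableSpace Ω] (P : Measure Ω) [IsProbabilityMeasure P]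
    (ξ₁ ξ₂ : Ω → ℝ) (hmeas₁ : Measurable ξ₁) (hmeas₂ : Measurable ξ₂)
    (hmean₁ : (∫ ω, ξ₁ ω ∂P) = 0) (hmean₂ : (∫ ω, ξ₂ ω ∂P) = 0)
    (hvar₁ : (∫ ω, (ξ₁ ω) ^ 2 ∂P) = 1) (hvar₂ : (∫ ω, (ξ₂ ω) ^ 2 ∂P) = 1)
    (τ : ℝ) (hτ : 0 < τ)
    (hmom₁ : (∫⁻ ω, ENNReal.ofReal (|ξ₁ ω| ^ (6 + τ)) ∂P) < ⊤)
    (hmom₂ : (∫⁻ ω, ENNReal.ofReal (|ξ₂ ω| ^ (6 + τ)) ∂P) < ⊤)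
    (ρ : ℝ) (hρ : ρ = ∫ ω, ξ₁ ω * ξ₂ ω ∂P)
    (ε : ℝ) (hε : 0 < ε)
    (hlim₁ : Tendsto (fun n : ℕ => (n : ℝ) ^ (6 * ε) *
        ∫ ω, (if (n : ℝ) ^ ((1 : ℝ) / 2 - ε) < |ξ₁ ω| then |ξ₁ ω| ^ 6 else 0) ∂P)
      atTop (𝓝 0))
    (hlim₂ : Tendsto (fun n : ℕ => (n : ℝ) ^ (6 * ε) *
        ∫ ω, (if (n : ℝ) ^ ((1 : ℝ) / 2 - ε) < |ξ₂ ω| then |ξ₂ ω| ^ 6 else 0) ∂P)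
      atTop (𝓝 0))
    (tξ₁ tξ₂ : ℕ → Ω → ℝ)
    (htξ₁ : ∀ n ω, tξ₁ n ω =
      (if |ξ₁ ω| ≤ (n : ℝ) ^ ((1 : ℝ) / 2 - ε) then ξ₁ ω else 0)
        - ∫ ω', (if |ξ₁ ω'| ≤ (n : ℝ) ^ ((1 : ℝ) / 2 - ε) then ξ₁ ω' else 0) ∂P)
    (htξ₂ : ∀ n ω, tξ₂ n ω =
      (if |ξ₂ ω| ≤ (n : ℝ) ^ ((1 : ℝ) / 2 - ε) then ξ₂ ω else 0)
        - ∫ ω', (if |ξ₂ ω'| ≤ (n : ℝ) ^ ((1 : ℝ) / 2 - ε) then ξ₂ ω' else 0) ∂P)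
    (ρhat : ℕ → ℝ)
    (hρhat : ∀ n, ρhat n =
      (∫ ω, tξ₁ n ω * tξ₂ n ω ∂P) /
        (Real.sqrt (∫ ω, (tξ₁ n ω) ^ 2 ∂P) * Real.sqrt (∫ ω, (tξ₂ n ω) ^ 2 ∂P))) :
    Tendsto (fun n : ℕ => (n : ℝ) * (ρhat n - ρ)) atTop (𝓝 0) := by
  have h6 : (6 : ENNReal) ≤ ENNReal.ofReal (6 + τ) := by
    rw [← ENNReal.ofReal_ofNat]; exact ENNReal.ofReal_le_ofReal (by linarith)
  have hξ₁ := (memLp_ofReal_of_lintegral_rpow_lt_top (by linarith)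
    hmeas₁.aestronglyMeasurable hmom₁).mono_exponent h6
  have hξ₂ := (memLp_ofReal_of_lintegral_rpow_lt_top (by linarith)
    hmeas₂.aestronglyMeasurable hmom₂).mono_exponent h6
  have hVar : ∀ {ξ : Ω → ℝ}, Measurable ξ → ∀ t : ℝ, Var[fun ω => truncAt t (ξ ω); P] =
      ∫ ω, (truncAt t (ξ ω) - ∫ ω', truncAt t (ξ ω') ∂P) ^ 2 ∂P :=
    fun hξ t => variance_eq_integral ((measurable_truncAt t).comp hξ).aemeasurable
  subst hρ
  refine (tendsto_mul_div_sqrt_mul_sqrt_sub tendsto_natCast_atTop_atTop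
    (tendsto_mul_covariance_truncAt_sub hξ₁ hξ₂ hmeas₁ hmeas₂ hmean₁ hmean₂ hvar₁ hvar₂ hε
      hlim₁ hlim₂)
    (tendsto_mul_variance_truncAt_sub_one hξ₁ hmeas₁ hmean₁ hvar₁ hε.le hlim₁)
    (tendsto_mul_variance_truncAt_sub_one hξ₂ hmeas₂ hmean₂ hvar₂ hε.le hlim₂)).congr fun n => ?_
  simp only [hρhat, htξ₁, htξ₂, hVar hmeas₁, hVar hmeas₂]
  rfl
end

section
/- Let N ≥ 2 and let A be an N×N complex matrix written in block form A = [[a, r],[c, A']], where a ∈ ℂ, r is a 1×(N−1) row vector, c is an (N−1)×1 column vector, and A' is an (N−1)×(N−1) matrix. Assume A and A' are invertible and a − r A'^{−1} c ≠ 0. Then tr(A^{−1}) − tr(A'^{−1}) = (1 + r A'^{−2} c)/(a − r A'^{−1} c). -/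
/-!
With `S = a - r A'⁻¹ c` the Schur complement of `A'`, block inversion gives `S⁻¹` as the top-left
entry of `A⁻¹` and `A'⁻¹ + A'⁻¹ c S⁻¹ r A'⁻¹` as its bottom-right block. Cyclicity of the trace
turns `tr (A'⁻¹ c S⁻¹ r A'⁻¹)` into `S⁻¹ r A'⁻² c`, so the two traces differ by
`S⁻¹ (1 + r A'⁻² c)`.
-/

open Matrix

namespace Matrix

variable {m n R : Type*} [Fintype m] [Fintype n]

theorem trace_fromBlocks [AddCommMonoid R] (A : Matrix m m R) (B : Matrix m n R)
    (C : Matrix n m R) (D : Matrix n n R) :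
    trace (fromBlocks A B C D) = trace A + trace D := by
  simp [trace, Fintype.sum_sum_type]

theorem inv_fin_one_apply [Field R] (A : Matrix (Fin 1) (Fin 1) R) : A⁻¹ 0 0 = (A 0 0)⁻¹ := by
  simp only [inv_subsingleton, Ring.inverse_eq_inv', diagonal_apply_eq]

variable [DecidableEq m] [DecidableEq n] [CommRing R]

theorem trace_inv_fromBlocks_sub_trace_inv (A : Matrix m m R) (B : Matrix m n R)
    (C : Matrix n m R) (D : Matrix n n R) (hD : IsUnit D.det)
    (hS : IsUnit (A - B * D⁻¹ * C).det) :
    trace (fromBlocks A B C D)⁻¹ - trace D⁻¹ =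
      trace ((A - B * D⁻¹ * C)⁻¹ * (1 + B * D⁻¹ * D⁻¹ * C)) := by
  let := D.invertibleOfIsUnitDet hD
  let := (A - B * D⁻¹ * C).invertibleOfIsUnitDet hS
  let := fromBlocks₂₂Invertible A B C D
  simp only [← invOf_eq_nonsing_inv] at *
  set S := A - B * ⅟D * C
  have hcycle : trace (⅟D * C * ⅟S * B * ⅟D) = trace (⅟S * B * ⅟D * ⅟D * C) := by
    rw [show ⅟D * C * ⅟S * B * ⅟D = (⅟D * C) * (⅟S * B * ⅟D) by simp only [Matrix.mul_assoc],
      trace_mul_comm]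
    simp only [Matrix.mul_assoc]
  rw [invOf_fromBlocks₂₂_eq, trace_fromBlocks, trace_add, hcycle, Matrix.mul_add, Matrix.mul_one,
    trace_add]
  simp only [Matrix.mul_assoc]
  abel

end Matrix

theorem stmt13_general (n : ℕ) (a : ℂ)
    (r : Matrix (Fin 1) (Fin n) ℂ) (c : Matrix (Fin n) (Fin 1) ℂ)
    (A' : Matrix (Fin n) (Fin n) ℂ)
    (A : Matrix (Fin 1 ⊕ Fin n) (Fin 1 ⊕ Fin n) ℂ)
    (hA : A = Matrix.fromBlocks (Matrix.of fun _ _ => a) r c A')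
    (hA'inv : IsUnit A'.det)
    (hschur : a - (r * A'⁻¹ * c) 0 0 ≠ 0) :
    Matrix.trace A⁻¹ - Matrix.trace A'⁻¹ =
      (1 + (r * A'⁻¹ * A'⁻¹ * c) 0 0) / (a - (r * A'⁻¹ * c) 0 0) := by
  have hS : IsUnit (of (fun _ _ => a) - r * A'⁻¹ * c).det := by
    simpa only [det_fin_one, Matrix.sub_apply, of_apply] using hschur.isUnit
  rw [hA, trace_inv_fromBlocks_sub_trace_inv _ _ _ _ hA'inv hS, trace_fin_one, mul_apply,
    Fin.sum_univ_one, inv_fin_one_apply]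
  simp only [Matrix.sub_apply, Matrix.add_apply, of_apply, one_apply_eq, Matrix.mul_assoc]
  rw [div_eq_inv_mul]

/-- Trace identity for the resolvent of a matrix and its principal `(N-1) × (N-1)` submatrix:
`tr A⁻¹ − tr A'⁻¹ = (1 + r A'⁻² c)/(a − r A'⁻¹ c)`. -/
theorem stmt13 (n : ℕ) (hn : 1 ≤ n) (a : ℂ)
    (r : Matrix (Fin 1) (Fin n) ℂ) (c : Matrix (Fin n) (Fin 1) ℂ)
    (A' : Matrix (Fin n) (Fin n) ℂ)
    (A : Matrix (Fin 1 ⊕ Fin n) (Fin 1 ⊕ Fin n) ℂ)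
    (hA : A = Matrix.fromBlocks (Matrix.of fun _ _ => a) r c A')
    (hAinv : IsUnit A.det) (hA'inv : IsUnit A'.det)
    (hschur : a - (r * A'⁻¹ * c) 0 0 ≠ 0) :
    Matrix.trace A⁻¹ - Matrix.trace A'⁻¹ =
      (1 + (r * A'⁻¹ * A'⁻¹ * c) 0 0) / (a - (r * A'⁻¹ * c) 0 0) :=
  stmt13_general n a r c A' A hA hA'inv hschur
end

section
/- For ϱ ∈ [−1,1] with |ϱ| < 1, let E_ϱ := {z ∈ ℂ : (Re z)²/(1+ϱ)² + (Im z)²/(1−ϱ)² < 1}, with E₁ := [−2,2] and E₋₁ the segment from −2i to 2i. Fix δ > 0, ρ ∈ [−1,1], and z ∈ ℂ with dist(z, E_ρ) > δ. Then: (a) for every ϱ ∈ [−1,1] with dist(z, E_ϱ) > 0 there is a unique complex number m_ϱ(z) with |m_ϱ(z)| < 1 satisfying ϱ·m_ϱ(z)² + z·m_ϱ(z) + 1 = 0; and (b) for any sequence ρ_N ∈ [−1,1] with ρ_N → ρ as N → ∞ (so that dist(z, E_{ρ_N}) > 0 for all N large), one has m_{ρ_N}(z) → m_ρ(z) as N →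 ∞. -/
open MeasureTheory Filter Topology

/-! The two roots of `u² - z u + ϱ = 0` have product `ϱ` and sum `z`. If both lay in the closed
unit disc, `z` would lie in the closure of `E_ϱ`: writing `v = ϱ conj u / |u|²` shows that
`u + v` is in the closed ellipse as soon as `ϱ² ≤ |u|² ≤ 1`. So one root `u` has `|u| > 1`, and
`m = -1/u` is a solution. Subtracting the equations for `(ϱ, m)` and `(ϱ', m')` gives
`(m' - m)(ϱ' m m' - 1) = (ϱ - ϱ') m² m'`, hence `|m' - m| (1 - |m|) ≤ |ϱ' - ϱ|`, which yields
uniqueness and continuity in `ϱ` at once. -/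

open Set ComplexConjugate

noncomputable def ellipseForm (p : ℝ) (w : ℂ) : ℝ :=
  w.re ^ 2 / (1 + p) ^ 2 + w.im ^ 2 / (1 - p) ^ 2

lemma ellipseForm_add_le_one {p : ℝ} (hp : p ∈ Ioo (-1) 1) {u v : ℂ} (hu : ‖u‖ ≤ 1)
    (hv : ‖v‖ ≤ 1) (huv : u * v = p) : ellipseForm p (u + v) ≤ 1 := by
  rcases eq_or_ne u 0 with rfl | hu0
  · obtain rfl : p = 0 := by exact_mod_cast (by simpa using huv.symm : (p : ℂ) = 0)
    have hv2 : v.re ^ 2 + v.im ^ 2 ≤ 1 := by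
      have := pow_le_one₀ (norm_nonneg v) hv (n := 2)
      rwa [Complex.sq_norm, Complex.normSq_apply, ← sq, ← sq] at this
    simpa [ellipseForm] using hv2
  set s := ‖u‖ ^ 2 with hs_def
  have hs : 0 < s := by positivity
  have hs1 : s ≤ 1 := pow_le_one₀ (norm_nonneg u) hu
  have hps : p ^ 2 ≤ s := by
    have hpu : |p| ≤ ‖u‖ := by
      calc |p| = ‖u‖ * ‖v‖ := by rw [← norm_mul, huv, Complex.norm_real, Real.norm_eq_abs]
        _ ≤ ‖u‖ * 1 := by gcongr
        _ = ‖u‖ := mul_one _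
    simpa [sq_abs] using pow_le_pow_left₀ (abs_nonneg p) hpu 2
  have hre_im : u.re ^ 2 + u.im ^ 2 = s := by
    rw [hs_def, Complex.sq_norm, Complex.normSq_apply]; ring
  have hv_eq : v = p * u⁻¹ := by rw [← huv, mul_comm u v, mul_assoc, mul_inv_cancel₀ hu0, mul_one]
  have hvre : v.re = p * u.re / s := by
    rw [hv_eq, Complex.re_ofReal_mul, Complex.inv_re, Complex.normSq_eq_norm_sq]; ring
  have hvim : v.im = -(p * u.im / s) := by
    rw [hv_eq, Complex.im_ofReal_mul, Complex.inv_im, Complex.normSq_eq_norm_sq]; ring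
  -- `(s ± p)² - s (1 ± p)² = (s - 1)(s - p²)`
  have hplus : (s + p) ^ 2 ≤ s * (1 + p) ^ 2 := by
    nlinarith [mul_nonneg (sub_nonneg.2 hs1) (sub_nonneg.2 hps)]
  have hminus : (s - p) ^ 2 ≤ s * (1 - p) ^ 2 := by
    nlinarith [mul_nonneg (sub_nonneg.2 hs1) (sub_nonneg.2 hps)]
  have h1p : 0 < 1 + p := by linarith [hp.1]
  have h1m : 0 < 1 - p := by linarith [hp.2]
  calc ellipseForm p (u + v)
      = u.re ^ 2 / s * ((s + p) ^ 2 / (s * (1 + p) ^ 2))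
        + u.im ^ 2 / s * ((s - p) ^ 2 / (s * (1 - p) ^ 2)) := by
        rw [ellipseForm, Complex.add_re, Complex.add_im, hvre, hvim]
        field_simp
        ring
    _ ≤ u.re ^ 2 / s * 1 + u.im ^ 2 / s * 1 := by
        gcongr
        · exact div_le_one_of_le₀ hplus (by positivity)
        · exact div_le_one_of_le₀ hminus (by positivity)
    _ = 1 := by rw [mul_one, mul_one, ← add_div, hre_im, div_self hs.ne']

lemma mem_closure_ellipse {p : ℝ} (hp : p ∈ Ioo (-1) 1) {w : ℂ} (hw : ellipseForm p w ≤ 1) :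
    w ∈ closure (ellipse p) := by
  have hform (t : ℝ) : ellipseForm p (t * w) = t ^ 2 * ellipseForm p w := by
    simp only [ellipseForm, Complex.re_ofReal_mul, Complex.im_ofReal_mul]
    ring
  have hlim : Tendsto (fun t : ℝ => (t : ℂ) * w) (𝓝[<] 1) (𝓝 w) := by
    have hcont : Continuous fun t : ℝ => (t : ℂ) * w := by fun_prop
    simpa using (hcont.tendsto 1).mono_left nhdsWithin_le_nhds
  refine mem_closure_of_tendsto hlim ?_
  filter_upwards [Ioo_mem_nhdsLT one_pos] with t ht
  rw [ellipse, if_neg hp.2.ne, if_neg hp.1.ne']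
  change ellipseForm p _ < 1
  rw [hform]
  calc t ^ 2 * ellipseForm p w ≤ t ^ 2 * 1 := by gcongr
    _ < 1 := by rw [mul_one]; exact pow_lt_one₀ ht.1.le ht.2 two_ne_zero

lemma eq_mul_mul_conj_of_norm_mul_eq_one {u v : ℂ} (hu : ‖u‖ ≤ 1) (hv : ‖v‖ ≤ 1)
    (huv : ‖u * v‖ = 1) : v = u * v * conj u := by
  have hu1 : ‖u‖ = 1 := by
    rw [norm_mul] at huv
    nlinarith [norm_nonneg u, norm_nonneg v]
  rw [mul_comm u v, mul_assoc, Complex.mul_conj', hu1]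
  simp

lemma add_conj_mem_ellipse_one {u : ℂ} (hu : ‖u‖ ≤ 1) : u + conj u ∈ ellipse 1 := by
  rw [ellipse, if_pos rfl]
  refine ⟨by simp, ?_⟩
  rw [Complex.add_re, Complex.conj_re, ← two_mul, abs_mul, abs_two]
  linarith [(Complex.abs_re_le_norm u).trans hu]

lemma sub_conj_mem_ellipse_neg_one {u : ℂ} (hu : ‖u‖ ≤ 1) : u - conj u ∈ ellipse (-1) := by
  rw [ellipse, if_neg (by norm_num), if_pos rfl]
  refine ⟨by simp, ?_⟩
  rw [Complex.sub_im, Complex.conj_im, sub_neg_eq_add, ← two_mul, abs_mul, abs_two]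
  linarith [(Complex.abs_im_le_norm u).trans hu]

lemma add_mem_closure_ellipse {p : ℝ} (hp : p ∈ Icc (-1) 1) {u v : ℂ} (hu : ‖u‖ ≤ 1)
    (hv : ‖v‖ ≤ 1) (huv : u * v = p) : u + v ∈ closure (ellipse p) := by
  rcases hp.2.eq_or_lt with rfl | hp1
  · have hv' := eq_mul_mul_conj_of_norm_mul_eq_one hu hv (by simp [huv])
    rw [huv, Complex.ofReal_one, one_mul] at hv'
    exact subset_closure (hv' ▸ add_conj_mem_ellipse_one hu)
  rcases hp.1.eq_or_lt with rfl | hp0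
  · have hv' := eq_mul_mul_conj_of_norm_mul_eq_one hu hv (by simp [huv])
    rw [huv, Complex.ofReal_neg, Complex.ofReal_one, neg_one_mul] at hv'
    rw [hv', ← sub_eq_add_neg]
    exact subset_closure (sub_conj_mem_ellipse_neg_one hu)
  · exact mem_closure_ellipse ⟨hp0, hp1⟩ (ellipseForm_add_le_one ⟨hp0, hp1⟩ hu hv huv)

lemma exists_root_norm_lt_one {ϱ : ℝ} (hϱ : ϱ ∈ Icc (-1) 1) {z : ℂ}
    (hz : 0 < Metric.infDist z (ellipse ϱ)) :
    ∃ m : ℂ, ‖m‖ < 1 ∧ (ϱ : ℂ) * m ^ 2 + z * m + 1 = 0 := by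
  obtain ⟨w, hw⟩ := IsAlgClosed.exists_pow_nat_eq (z ^ 2 - 4 * ϱ) two_pos
  obtain ⟨u, hu1, hu⟩ : ∃ u : ℂ, 1 < ‖u‖ ∧ u ^ 2 - z * u + ϱ = 0 := by
    by_contra! h
    have hplus : ‖(z + w) / 2‖ ≤ 1 := not_lt.1 fun h' => h _ h' (by linear_combination hw / 4)
    have hminus : ‖(z - w) / 2‖ ≤ 1 := not_lt.1 fun h' => h _ h' (by linear_combination hw / 4)
    have hz_mem := add_mem_closure_ellipse hϱ hplus hminus (by linear_combination -hw / 4)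
    rw [← add_div, add_add_sub_cancel, ← two_mul, mul_div_cancel_left₀ _ two_ne_zero] at hz_mem
    exact hz.ne' (Metric.infDist_zero_of_mem_closure hz_mem)
  have hu0 : u ≠ 0 := norm_pos_iff.1 (one_pos.trans hu1)
  refine ⟨-u⁻¹, by rw [norm_neg, norm_inv]; exact inv_lt_one_of_one_lt₀ hu1, ?_⟩
  field_simp
  linear_combination hu

lemma norm_sub_mul_le_of_root {ϱ ϱ' : ℝ} {z m m' : ℂ} (hϱ' : |ϱ'| ≤ 1) (hm : ‖m‖ < 1)
    (hm' : ‖m'‖ ≤ 1) (h : (ϱ : ℂ) * m ^ 2 + z * m + 1 = 0)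
    (h' : (ϱ' : ℂ) * m' ^ 2 + z * m' + 1 = 0) :
    ‖m' - m‖ * (1 - ‖m‖) ≤ |ϱ' - ϱ| := by
  have key : (m' - m) * (ϱ' * m * m' - 1) = (ϱ - ϱ') * m ^ 2 * m' := by
    linear_combination m * h' - m' * h
  have hlower : 1 - ‖m‖ ≤ ‖(ϱ' : ℂ) * m * m' - 1‖ := by
    have hsmall : ‖(ϱ' : ℂ) * m * m'‖ ≤ ‖m‖ := by
      rw [norm_mul, norm_mul, Complex.norm_real, Real.norm_eq_abs]
      calc |ϱ'| * ‖m‖ * ‖m'‖ ≤ 1 * ‖m‖ * 1 := by gcongr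
        _ = ‖m‖ := by ring
    calc 1 - ‖m‖ ≤ ‖(1 : ℂ)‖ - ‖(ϱ' : ℂ) * m * m'‖ := by rw [norm_one]; linarith
      _ ≤ ‖(ϱ' : ℂ) * m * m' - 1‖ := by rw [norm_sub_rev]; exact norm_sub_norm_le _ _
  calc ‖m' - m‖ * (1 - ‖m‖) ≤ ‖m' - m‖ * ‖(ϱ' : ℂ) * m * m' - 1‖ := by gcongr
    _ = |ϱ' - ϱ| * ‖m‖ ^ 2 * ‖m'‖ := by
        rw [← norm_mul, key, ← Complex.ofReal_sub, norm_mul, norm_mul, norm_pow,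
          Complex.norm_real, Real.norm_eq_abs, abs_sub_comm]
    _ ≤ |ϱ' - ϱ| * 1 ^ 2 * 1 := by gcongr
    _ = |ϱ' - ϱ| := by ring

theorem stmt19_general (ρ : ℝ) (z : ℂ) :
    (∀ ϱ ∈ Set.Icc (-1 : ℝ) 1, 0 < Metric.infDist z (ellipse ϱ) →
      ∃! m : ℂ, ‖m‖ < 1 ∧ (ϱ : ℂ) * m ^ 2 + z * m + 1 = 0) ∧
    (∀ ρseq : ℕ → ℝ, (∀ n, ρseq n ∈ Set.Icc (-1 : ℝ) 1) →
      Tendsto ρseq atTop (𝓝 ρ) →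
      ∀ (mseq : ℕ → ℂ) (mρ : ℂ),
        (∀ᶠ n in atTop,
          ‖mseq n‖ < 1 ∧ (ρseq n : ℂ) * mseq n ^ 2 + z * mseq n + 1 = 0) →
        (‖mρ‖ < 1 ∧ (ρ : ℂ) * mρ ^ 2 + z * mρ + 1 = 0) →
        Tendsto mseq atTop (𝓝 mρ)) := by
  constructor
  · rintro ϱ hϱ hdist
    obtain ⟨m, hm⟩ := exists_root_norm_lt_one hϱ hdist
    refine ⟨m, hm, fun m' hm' => ?_⟩
    have hle := norm_sub_mul_le_of_root (abs_le.2 hϱ) hm.1 hm'.1.le hm.2 hm'.2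
    rw [sub_self, abs_zero] at hle
    exact sub_eq_zero.1 (norm_le_zero_iff.1 (nonpos_of_mul_nonpos_left hle (by linarith [hm.1])))
  · rintro ρseq hρseq hρlim mseq mρ hmseq ⟨hmρ, hmρ_root⟩
    have hgap : 0 < 1 - ‖mρ‖ := by linarith
    rw [tendsto_iff_norm_sub_tendsto_zero]
    refine squeeze_zero' (Eventually.of_forall fun n => norm_nonneg _) ?_
      (g := fun n => |ρseq n - ρ| / (1 - ‖mρ‖)) ?_
    · filter_upwards [hmseq] with n ⟨hn, hn_root⟩
      rw [le_div_iff₀ hgap]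
      exact norm_sub_mul_le_of_root (abs_le.2 (hρseq n)) hmρ hn.le hmρ_root hn_root
    · simpa using ((hρlim.sub_const ρ).abs.div_const (1 - ‖mρ‖))

/-- Existence, uniqueness and continuity in `ϱ` of the Stieltjes-transform value `m_ϱ(z)`,
the solution of `ϱ m² + z m + 1 = 0` of modulus less than one, for `z` outside `E_ϱ`. -/
theorem stmt19 (δ : ℝ) (hδ : 0 < δ) (ρ : ℝ) (hρ : ρ ∈ Set.Icc (-1 : ℝ) 1)
    (z : ℂ) (hz : δ < Metric.infDist z (ellipse ρ)) :
    (∀ ϱ ∈ Set.Icc (-1 : ℝ) 1, 0 < Metric.infDist z (ellipse ϱ) →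
      ∃! m : ℂ, ‖m‖ < 1 ∧ (ϱ : ℂ) * m ^ 2 + z * m + 1 = 0) ∧
    (∀ ρseq : ℕ → ℝ, (∀ n, ρseq n ∈ Set.Icc (-1 : ℝ) 1) →
      Tendsto ρseq atTop (𝓝 ρ) →
      ∀ (mseq : ℕ → ℂ) (mρ : ℂ),
        (∀ᶠ n in atTop,
          ‖mseq n‖ < 1 ∧ (ρseq n : ℂ) * mseq n ^ 2 + z * mseq n + 1 = 0) →
        (‖mρ‖ < 1 ∧ (ρ : ℂ) * mρ ^ 2 + z * mρ + 1 = 0) →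
        Tendsto mseq atTop (𝓝 mρ)) :=
  stmt19_general ρ z
end
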